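/- arXiv:2304.13454 — 7 statements merged into one kernel-verified Lean document; each statement's English description precedes it below -/
import Mathlib

section
/- Let φ° be a norm on ℝ² that is twice continuously differentiable on ℝ² ∖ {0}, and let σ, β ∈ C²([0,1]; ℝ²) with σ'(x) ≠ 0 for every x ∈ [0,1]. Set ν(x) = σ'(x)^⊥/|σ'(x)|, N(x) = ∇φ°(σ'(x)^⊥) and κ^φ(x) = N'(x)·σ'(x)/|σ'(x)|². Then the function ℓ(s) = ∫₀¹ φ°((σ'(x) + s β'(x))^⊥) dx (defined for |s| small enough that σ' + sβ' never vanishes) is differentiable at s = 0 and ℓ'(0) = ∫₀¹ (β(x)·ν(x)) κ^φ(x) |σ'(x)| dx + β(0)·N(0)^⊥ − β(1)·N(1)^⊥. -/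
/-!
Differentiating under the integral sign gives `ℓ'(0) = ∫ ∇φ°(σ'^⊥) · β'^⊥ = -∫ β' · N^⊥`, and an
integration by parts moves the derivative onto `N`, producing the boundary terms and
`∫ β · N'^⊥`. As `∇φ°` is 0-homogeneous, Euler's relation and the symmetry of `D²φ°` give
`N' · σ'^⊥ = D²φ°(σ'^⊥)[σ''^⊥, σ'^⊥] = 0`, so in the plane `N' = κ^φ σ'`, whence
`β · N'^⊥ = κ^φ (β · σ'^⊥) = (β · ν) κ^φ |σ'|`.
-/

noncomputable section
open Set

abbrev E2 : Type := EuclideanSpace ℝ (Fin 2)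

/-- counterclockwise 90°-rotation of a vector in the plane -/
def perp (a : E2) : E2 := !₂[-(a 1), a 0]

local notation "⟪" x ", " y "⟫" => @inner ℝ _ _ x y

/-- Cahn-Hoffman vector field `N(x) = ∇φ°(σ'(x)^⊥)` of a parametrized curve. -/
def CH (φ : E2 → ℝ) (σ : ℝ → E2) (x : ℝ) : E2 :=
  gradient φ (perp (derivWithin σ (Set.Icc 0 1) x))

/-- unit normal `ν(x) = σ'(x)^⊥ / |σ'(x)|` -/
def nor (σ : ℝ → E2) (x : ℝ) : E2 :=
  ‖derivWithin σ (Set.Icc 0 1) x‖⁻¹ • perp (derivWithin σ (Set.Icc 0 1) x)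

/-- anisotropic curvature `κ^φ(x) = N'(x)·σ'(x)/|σ'(x)|²` -/
def curv (φ : E2 → ℝ) (σ : ℝ → E2) (x : ℝ) : ℝ :=
  ⟪derivWithin (CH φ σ) (Set.Icc 0 1) x, derivWithin σ (Set.Icc 0 1) x⟫ /
    ‖derivWithin σ (Set.Icc 0 1) x‖ ^ 2

open Filter Topology Metric MeasureTheory

theorem exists_pos_forall_add_smul_mem {X E : Type*} [TopologicalSpace X] [NormedAddCommGroup E]
    [NormedSpace ℝ E] {K : Set X} {U : Set E} (hK : IsCompact K) (hU : IsOpen U) {u v : X → E}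
    (hu : ContinuousOn u K) (hv : ContinuousOn v K) (huU : MapsTo u K U) :
    ∃ ε > 0, ∀ s : ℝ, |s| ≤ ε → ∀ x ∈ K, u x + s • v x ∈ U := by
  obtain ⟨δ, hδ, hδU⟩ :=
    (hK.image_of_continuousOn hu).exists_thickening_subset_open hU huU.image_subset
  obtain ⟨M, hM⟩ := hK.exists_bound_of_continuousOn hv
  have hM1 : 0 < |M| + 1 := by positivity
  refine ⟨δ / 2 / (|M| + 1), by positivity, fun s hs x hx => hδU ?_⟩
  refine mem_thickening_iff.2 ⟨u x, mem_image_of_mem u hx, ?_⟩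
  rw [dist_eq_norm, add_sub_cancel_left, norm_smul, Real.norm_eq_abs]
  calc |s| * ‖v x‖ ≤ δ / 2 / (|M| + 1) * (|M| + 1) :=
        mul_le_mul hs ((hM x hx).trans ((le_abs_self M).trans (le_add_of_nonneg_right zero_le_one)))
          (norm_nonneg _) (by positivity)
    _ < δ := by rw [div_mul_cancel₀ _ hM1.ne']; linarith

theorem hasDerivAt_intervalIntegral_comp_add_smul {E F : Type*} [NormedAddCommGroup E]
    [NormedSpace ℝ E] [NormedAddCommGroup F] [NormedSpace ℝ F] {f : E → F} {U : Set E}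
    (hU : IsOpen U) (hf : ContDiffOn ℝ 1 f U) {u v : ℝ → E} {a b : ℝ}
    (hu : ContinuousOn u (uIcc a b)) (hv : ContinuousOn v (uIcc a b))
    (huU : MapsTo u (uIcc a b) U) :
    HasDerivAt (fun s : ℝ => ∫ x in a..b, f (u x + s • v x))
      (∫ x in a..b, fderiv ℝ f (u x) (v x)) 0 := by
  obtain ⟨ε, hε, hεU⟩ := exists_pos_forall_add_smul_mem isCompact_uIcc hU hu hv huU
  have hball : ∀ s ∈ ball (0 : ℝ) ε, |s| ≤ ε := fun s hs => by
    simpa [Real.dist_eq] using (mem_ball.1 hs).le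
  have hF : ∀ s, |s| ≤ ε → ContinuousOn (fun x => f (u x + s • v x)) (uIcc a b) :=
    fun s hs => hf.continuousOn.comp (hu.add (hv.const_smul s)) (hεU s hs)
  have hF' : ContinuousOn (fun p : ℝ × ℝ => fderiv ℝ f (u p.2 + p.1 • v p.2) (v p.2))
      (Icc (-ε) ε ×ˢ uIcc a b) := by
    have hv2 : ContinuousOn (fun p : ℝ × ℝ => v p.2) (Icc (-ε) ε ×ˢ uIcc a b) :=
      hv.comp continuousOn_snd fun p hp => hp.2
    refine ((hf.continuousOn_fderiv_of_isOpen hU le_rfl).comp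
      ((hu.comp continuousOn_snd fun p hp => hp.2).add (continuousOn_fst.smul hv2))
      fun p hp => hεU p.1 (abs_le.2 hp.1) p.2 hp.2).clm_apply hv2
  -- the `s`-derivative is jointly continuous on a compact rectangle, so a constant dominates it
  obtain ⟨C, hC⟩ := (isCompact_Icc.prod isCompact_uIcc).exists_bound_of_continuousOn hF'
  have hderiv : ∀ s, |s| ≤ ε → ∀ x ∈ uIcc a b, HasDerivAt (fun s => f (u x + s • v x))
      (fderiv ℝ f (u x + s • v x) (v x)) s := fun s hs x hx => by
    have hdiff := (hf.differentiableOn one_ne_zero _ (hεU s hs x hx)).differentiableAt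
      (hU.mem_nhds (hεU s hs x hx))
    simpa [Function.comp_def] using
      hdiff.hasFDerivAt.comp_hasDerivAt s (((hasDerivAt_id s).smul_const (v x)).const_add (u x))
  have hdom := intervalIntegral.hasDerivAt_integral_of_dominated_loc_of_deriv_le
    (μ := volume) (F' := fun s x => fderiv ℝ f (u x + s • v x) (v x)) (bound := fun _ => C)
    (ball_mem_nhds 0 hε)
    (eventually_of_mem (ball_mem_nhds 0 hε) fun s hs =>
      ((hF s (hball s hs)).mono uIoc_subset_uIcc).aestronglyMeasurable measurableSet_uIoc)
    ((hF 0 (by simpa using hε.le)).intervalIntegrable)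
    (((hF'.comp (continuousOn_const.prodMk continuousOn_id) fun x hx =>
      ⟨by simpa using hε.le, hx⟩).mono uIoc_subset_uIcc).aestronglyMeasurable measurableSet_uIoc)
    (ae_of_all _ fun x hx s hs => hC (s, x) ⟨abs_le.1 (hball s hs), uIoc_subset_uIcc hx⟩)
    intervalIntegrable_const
    (ae_of_all _ fun x hx s hs => hderiv s (hball s hs) x (uIoc_subset_uIcc hx))
  simpa using hdom.2

theorem integral_inner_eq_sub_of_hasDerivWithinAt {E : Type*} [NormedAddCommGroup E]
    [InnerProductSpace ℝ E] {f g f' g' : ℝ → E} {a b : ℝ} (hab : a ≤ b)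
    (hf : ∀ x ∈ Icc a b, HasDerivWithinAt f (f' x) (Icc a b) x)
    (hg : ∀ x ∈ Icc a b, HasDerivWithinAt g (g' x) (Icc a b) x)
    (hf' : ContinuousOn f' (Icc a b)) (hg' : ContinuousOn g' (Icc a b)) :
    ∫ x in a..b, ⟪f' x, g x⟫ = ⟪f b, g b⟫ - ⟪f a, g a⟫ - ∫ x in a..b, ⟪f x, g' x⟫ := by
  have hfc : ContinuousOn f (Icc a b) := fun x hx => (hf x hx).continuousWithinAt
  have hgc : ContinuousOn g (Icc a b) := fun x hx => (hg x hx).continuousWithinAt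
  have hint : ∀ {u v : ℝ → E}, ContinuousOn u (Icc a b) → ContinuousOn v (Icc a b) →
      IntervalIntegrable (fun x => ⟪u x, v x⟫) volume a b := fun hu hv =>
    (hu.inner hv).intervalIntegrable_of_Icc hab
  have hprod : ∫ x in a..b, (⟪f x, g' x⟫ + ⟪f' x, g x⟫) = ⟪f b, g b⟫ - ⟪f a, g a⟫ :=
    intervalIntegral.integral_eq_sub_of_hasDerivAt_of_le hab (hfc.inner hgc)
      (fun x hx => ((hf x (Ioo_subset_Icc_self hx)).inner ℝ
        (hg x (Ioo_subset_Icc_self hx))).hasDerivAt (Icc_mem_nhds hx.1 hx.2))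
      ((hint hfc hg').add (hint hf' hgc))
  rw [← hprod, intervalIntegral.integral_add (hint hfc hg') (hint hf' hgc)]
  ring

section Homogeneous

variable {E F : Type*} [NormedAddCommGroup E] [NormedSpace ℝ E] [NormedAddCommGroup F]
  [NormedSpace ℝ F]

theorem fderiv_apply_self_eq_zero_of_eventually_smul {g : E → F} {z : E}
    (hg : DifferentiableAt ℝ g z) (hom : ∀ᶠ c in 𝓝 (1 : ℝ), g (c • z) = g z) :
    fderiv ℝ g z z = 0 := by
  have hray : HasDerivAt (fun c : ℝ => g (c • z)) (fderiv ℝ g z z) 1 := by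
    simpa [Function.comp_def] using HasFDerivAt.comp_hasDerivAt_of_eq 1 hg.hasFDerivAt
      ((hasDerivAt_id 1).smul_const z) (one_smul ℝ z).symm
  exact hray.unique ((hasDerivAt_const 1 (g z)).congr_of_eventuallyEq hom)

theorem fderiv_smul_of_posHomogeneous {f : E → F}
    (hom : ∀ c : ℝ, 0 < c → ∀ x, f (c • x) = c • f x) {z : E} {c : ℝ} (hc : 0 < c)
    (hf : DifferentiableAt ℝ f (c • z)) :
    fderiv ℝ f (c • z) = fderiv ℝ f z := by
  have hrescaled : HasFDerivAt f
      (c⁻¹ • (fderiv ℝ f (c • z)).comp (c • ContinuousLinearMap.id ℝ E)) z := by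
    have h := (hf.hasFDerivAt.comp z ((hasFDerivAt_id z).const_smul c)).const_smul c⁻¹
    convert h using 1
    funext x
    simp [hom c hc, smul_smul, inv_mul_cancel₀ hc.ne']
  rw [hrescaled.fderiv]
  ext v
  simp [smul_smul, inv_mul_cancel₀ hc.ne']

theorem fderiv_fderiv_apply_self_eq_zero_of_posHomogeneous {f : E → F}
    (hom : ∀ c : ℝ, 0 < c → ∀ x, f (c • x) = c • f x) {z : E} (hf : ContDiffAt ℝ 2 f z)
    (u : E) : fderiv ℝ (fderiv ℝ f) z u z = 0 := by
  rw [(hf.isSymmSndFDerivAt (by simp)).eq]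
  have hsmul : Tendsto (fun c : ℝ => c • z) (𝓝 1) (𝓝 z) := by
    simpa using (tendsto_id (x := 𝓝 (1 : ℝ))).smul_const z
  have h0 : ∀ᶠ c in 𝓝 (1 : ℝ), fderiv ℝ f (c • z) = fderiv ℝ f z := by
    filter_upwards [lt_mem_nhds one_pos, hsmul.eventually (hf.eventually (by simp))] with c hc hfc
    exact fderiv_smul_of_posHomogeneous hom hc (hfc.differentiableAt (by simp))
  rw [fderiv_apply_self_eq_zero_of_eventually_smul
    ((hf.fderiv_right (m := 1) le_rfl).differentiableAt one_ne_zero) h0]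
  rfl

end Homogeneous

theorem inner_fderiv_gradient_apply_self_eq_zero {E : Type*} [NormedAddCommGroup E]
    [InnerProductSpace ℝ E] [CompleteSpace E] {f : E → ℝ}
    (hom : ∀ c : ℝ, 0 < c → ∀ x, f (c • x) = c • f x) {z : E} (hf : ContDiffAt ℝ 2 f z)
    (u : E) : ⟪fderiv ℝ (gradient f) z u, z⟫ = 0 := by
  have hgrad : gradient f = (InnerProductSpace.toDual ℝ E).symm ∘ fderiv ℝ f := rfl
  rw [hgrad, LinearIsometryEquiv.comp_fderiv]
  exact InnerProductSpace.toDual_symm_apply.trans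
    (fderiv_fderiv_apply_self_eq_zero_of_posHomogeneous hom hf u)

theorem ContDiffOn.gradient_of_isOpen {E : Type*} [NormedAddCommGroup E] [InnerProductSpace ℝ E]
    [CompleteSpace E] {f : E → ℝ} {U : Set E} {n : WithTop ℕ∞} (hf : ContDiffOn ℝ (n + 1) f U)
    (hU : IsOpen U) : ContDiffOn ℝ n (gradient f) U :=
  (InnerProductSpace.toDual ℝ E).symm.contDiff.comp_contDiffOn (hf.fderiv_of_isOpen hU le_rfl)

theorem perp_add (a b : E2) : perp (a + b) = perp a + perp b := by
  ext i; fin_cases i <;> simp [perp]; ring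

theorem perp_smul (c : ℝ) (a : E2) : perp (c • a) = c • perp a := by
  ext i; fin_cases i <;> simp [perp]

def perpL : E2 →L[ℝ] E2 :=
  LinearMap.toContinuousLinearMap { toFun := perp, map_add' := perp_add, map_smul' := perp_smul }

theorem perpL_apply (a : E2) : perpL a = perp a := rfl

theorem perp_ne_zero {a : E2} (ha : a ≠ 0) : perp a ≠ 0 := by
  refine fun h => ha ?_
  ext i; fin_cases i
  · simpa [perp] using congrFun (congrArg (⇑) h) 1
  · simpa [perp] using congrFun (congrArg (⇑) h) 0

theorem inner_perp_left (a b : E2) : ⟪perp a, b⟫ = -⟪a, perp b⟫ := by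
  simp [perp, PiLp.inner_apply, Fin.sum_univ_two]

theorem norm_sq_smul_eq_of_inner_perp_eq_zero {v w : E2} (h : ⟪v, perp w⟫ = 0) :
    (‖w‖ ^ 2) • v = ⟪v, w⟫ • w := by
  have hw : ‖w‖ ^ 2 = w 0 ^ 2 + w 1 ^ 2 := by
    simp [EuclideanSpace.norm_sq_eq, Fin.sum_univ_two]
  simp [perp, PiLp.inner_apply, Fin.sum_univ_two] at h
  ext i; fin_cases i <;> simp [hw, PiLp.inner_apply, Fin.sum_univ_two]
  · linear_combination (-w 1) * h
  · linear_combination w 0 * h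

section Curve

variable {φ : E2 → ℝ} {σ β : ℝ → E2}

theorem hasDerivAt_integral_perp_add_smul (hφ : ContDiffOn ℝ 1 φ {0}ᶜ)
    (hσ : ContDiffOn ℝ 1 σ (Icc 0 1)) (hβ : ContDiffOn ℝ 1 β (Icc 0 1))
    (hreg : ∀ x ∈ Icc (0 : ℝ) 1, derivWithin σ (Icc 0 1) x ≠ 0) :
    HasDerivAt (fun s : ℝ => ∫ x in (0 : ℝ)..1,
        φ (perp (derivWithin σ (Icc 0 1) x + s • derivWithin β (Icc 0 1) x)))
      (-∫ x in (0 : ℝ)..1, ⟪derivWithin β (Icc 0 1) x, perp (CH φ σ x)⟫) 0 := by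
  have hI : uIcc (0 : ℝ) 1 = Icc 0 1 := uIcc_of_le zero_le_one
  have hcont : ∀ {γ : ℝ → E2}, ContDiffOn ℝ 1 γ (Icc 0 1) →
      ContinuousOn (fun x => perp (derivWithin γ (Icc 0 1) x)) (uIcc 0 1) := fun hγ => by
    rw [hI]
    exact perpL.continuous.comp_continuousOn
      (hγ.continuousOn_derivWithin (uniqueDiffOn_Icc one_pos) le_rfl)
  have hvar := hasDerivAt_intervalIntegral_comp_add_smul isOpen_compl_singleton hφ (hcont hσ)
    (hcont hβ) (by rw [hI]; exact fun x hx => perp_ne_zero (hreg x hx))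
  simp only [perp_add, perp_smul]
  refine hvar.congr_deriv ?_
  rw [← intervalIntegral.integral_neg]
  congr 1 with x
  rw [← inner_gradient_left, ← CH, real_inner_comm, ← inner_perp_left]

theorem contDiffOn_CH (hφ : ContDiffOn ℝ 2 φ {0}ᶜ) (hσ : ContDiffOn ℝ 2 σ (Icc 0 1))
    (hreg : ∀ x ∈ Icc (0 : ℝ) 1, derivWithin σ (Icc 0 1) x ≠ 0) :
    ContDiffOn ℝ 1 (CH φ σ) (Icc 0 1) :=
  (hφ.gradient_of_isOpen isOpen_compl_singleton).comp
    (perpL.contDiff.comp_contDiffOn (hσ.derivWithin (uniqueDiffOn_Icc one_pos) le_rfl))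
    fun x hx => perp_ne_zero (hreg x hx)

theorem derivWithin_CH (hφ : ContDiffOn ℝ 2 φ {0}ᶜ) (hσ : ContDiffOn ℝ 2 σ (Icc 0 1))
    (hreg : ∀ x ∈ Icc (0 : ℝ) 1, derivWithin σ (Icc 0 1) x ≠ 0) {x : ℝ} (hx : x ∈ Icc (0 : ℝ) 1) :
    derivWithin (CH φ σ) (Icc 0 1) x = fderiv ℝ (gradient φ) (perp (derivWithin σ (Icc 0 1) x))
      (perp (derivWithin (derivWithin σ (Icc 0 1)) (Icc 0 1) x)) := by
  have hσ' := ((hσ.derivWithin (uniqueDiffOn_Icc one_pos) le_rfl).differentiableOn one_ne_zero x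
    hx).hasDerivWithinAt
  have hz : perp (derivWithin σ (Icc 0 1) x) ∈ ({0}ᶜ : Set E2) := perp_ne_zero (hreg x hx)
  have hgrad := (((hφ.gradient_of_isOpen (n := 1) isOpen_compl_singleton).differentiableOn
    one_ne_zero _ hz).differentiableAt (isOpen_compl_singleton.mem_nhds hz)).hasFDerivAt
  exact (hgrad.comp_hasDerivWithinAt x (perpL.hasFDerivAt.comp_hasDerivWithinAt x hσ')).derivWithin
    (uniqueDiffOn_Icc one_pos x hx)

theorem inner_derivWithin_CH_perp_eq_zero (hom : ∀ c : ℝ, 0 < c → ∀ z, φ (c • z) = c • φ z)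
    (hφ : ContDiffOn ℝ 2 φ {0}ᶜ) (hσ : ContDiffOn ℝ 2 σ (Icc 0 1))
    (hreg : ∀ x ∈ Icc (0 : ℝ) 1, derivWithin σ (Icc 0 1) x ≠ 0) {x : ℝ} (hx : x ∈ Icc (0 : ℝ) 1) :
    ⟪derivWithin (CH φ σ) (Icc 0 1) x, perp (derivWithin σ (Icc 0 1) x)⟫ = 0 := by
  rw [derivWithin_CH hφ hσ hreg hx]
  exact inner_fderiv_gradient_apply_self_eq_zero hom
    (hφ.contDiffAt (isOpen_compl_singleton.mem_nhds (perp_ne_zero (hreg x hx)))) _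

theorem inner_perp_derivWithin_CH (hom : ∀ c : ℝ, 0 < c → ∀ z, φ (c • z) = c • φ z)
    (hφ : ContDiffOn ℝ 2 φ {0}ᶜ) (hσ : ContDiffOn ℝ 2 σ (Icc 0 1))
    (hreg : ∀ x ∈ Icc (0 : ℝ) 1, derivWithin σ (Icc 0 1) x ≠ 0) (b : E2) {x : ℝ}
    (hx : x ∈ Icc (0 : ℝ) 1) :
    ⟪b, perp (derivWithin (CH φ σ) (Icc 0 1) x)⟫
      = ⟪b, nor σ x⟫ * curv φ σ x * ‖derivWithin σ (Icc 0 1) x‖ := by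
  have hw : ‖derivWithin σ (Icc 0 1) x‖ ≠ 0 := norm_ne_zero_iff.2 (hreg x hx)
  have hN' : derivWithin (CH φ σ) (Icc 0 1) x = curv φ σ x • derivWithin σ (Icc 0 1) x := by
    rw [curv, div_eq_inv_mul, mul_smul, ← norm_sq_smul_eq_of_inner_perp_eq_zero
      (inner_derivWithin_CH_perp_eq_zero hom hφ hσ hreg hx), smul_smul,
      inv_mul_cancel₀ (pow_ne_zero 2 hw), one_smul]
  rw [hN', perp_smul, nor, real_inner_smul_right, real_inner_smul_right]
  field_simp

end Curve

theorem first_variation_of_anisotropic_length_general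
    (φ : E2 → ℝ)
    (hφ_hom : ∀ (c : ℝ) (x : E2), φ (c • x) = |c| * φ x)
    (hφ_smooth : ContDiffOn ℝ 2 φ {(0 : E2)}ᶜ)
    (σ β : ℝ → E2)
    (hσ : ContDiffOn ℝ 2 σ (Set.Icc 0 1))
    (hβ : ContDiffOn ℝ 2 β (Set.Icc 0 1))
    (hreg : ∀ x ∈ Set.Icc (0:ℝ) 1, derivWithin σ (Set.Icc 0 1) x ≠ 0) :
    HasDerivAt
      (fun s : ℝ => ∫ x in (0:ℝ)..1,
        φ (perp (derivWithin σ (Set.Icc 0 1) x + s • derivWithin β (Set.Icc 0 1) x)))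
      ((∫ x in (0:ℝ)..1,
          ⟪β x, nor σ x⟫ * curv φ σ x * ‖derivWithin σ (Set.Icc 0 1) x‖)
        + ⟪β 0, perp (CH φ σ 0)⟫ - ⟪β 1, perp (CH φ σ 1)⟫) 0 := by
  have hom : ∀ c : ℝ, 0 < c → ∀ z, φ (c • z) = c • φ z := fun c hc z => by
    rw [hφ_hom, abs_of_pos hc, smul_eq_mul]
  have hN := contDiffOn_CH hφ_smooth hσ hreg
  have hparts := integral_inner_eq_sub_of_hasDerivWithinAt zero_le_one
    (fun x hx => (hβ.differentiableOn two_ne_zero x hx).hasDerivWithinAt)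
    (fun x hx => perpL.hasFDerivAt.comp_hasDerivWithinAt x
      ((hN.differentiableOn one_ne_zero x hx).hasDerivWithinAt))
    (hβ.continuousOn_derivWithin (uniqueDiffOn_Icc one_pos) one_le_two)
    (perpL.continuous.comp_continuousOn
      (hN.continuousOn_derivWithin (uniqueDiffOn_Icc one_pos) le_rfl))
  have hcurv : ∫ x in (0 : ℝ)..1, ⟪β x, perp (derivWithin (CH φ σ) (Icc 0 1) x)⟫
      = ∫ x in (0 : ℝ)..1, ⟪β x, nor σ x⟫ * curv φ σ x * ‖derivWithin σ (Icc 0 1) x‖ :=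
    intervalIntegral.integral_congr fun x hx => inner_perp_derivWithin_CH hom hφ_smooth hσ hreg
      (β x) (by rwa [uIcc_of_le zero_le_one] at hx)
  refine (hasDerivAt_integral_perp_add_smul (hφ_smooth.of_le one_le_two)
    (hσ.of_le one_le_two) (hβ.of_le one_le_two) hreg).congr_deriv ?_
  simp only [Function.comp_def, perpL_apply] at hparts
  rw [hparts, hcurv]
  ring

/-- First variation of the anisotropic length of a single regular `C²` curve
(Proposition 3.1 of the paper, parametrized form). -/
theorem first_variation_of_anisotropic_length
    (φ : E2 → ℝ)
    (hφ_triangle : ∀ x y : E2, φ (x + y) ≤ φ x + φ y)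
    (hφ_hom : ∀ (c : ℝ) (x : E2), φ (c • x) = |c| * φ x)
    (hφ_pos : ∀ x : E2, φ x = 0 → x = 0)
    (hφ_smooth : ContDiffOn ℝ 2 φ {(0 : E2)}ᶜ)
    (σ β : ℝ → E2)
    (hσ : ContDiffOn ℝ 2 σ (Set.Icc 0 1))
    (hβ : ContDiffOn ℝ 2 β (Set.Icc 0 1))
    (hreg : ∀ x ∈ Set.Icc (0:ℝ) 1, derivWithin σ (Set.Icc 0 1) x ≠ 0) :
    HasDerivAt
      (fun s : ℝ => ∫ x in (0:ℝ)..1,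
        φ (perp (derivWithin σ (Set.Icc 0 1) x + s • derivWithin β (Set.Icc 0 1) x)))
      ((∫ x in (0:ℝ)..1,
          ⟪β x, nor σ x⟫ * curv φ σ x * ‖derivWithin σ (Set.Icc 0 1) x‖)
        + ⟪β 0, perp (CH φ σ 0)⟫ - ⟪β 1, perp (CH φ σ 1)⟫) 0 :=
  first_variation_of_anisotropic_length_general φ hφ_hom hφ_smooth σ β hσ hβ hreg
end
end

section
/- Let ρ ∈ (0,1], ρ' ∈ (0,ρ], let I ⊂ ℝ be a compact interval, and let G : I → ℝ be differentiable with |G'(t)| ≤ C₀ for all t ∈ I and |G'(s) − G'(t)| ≤ C₁|s−t|^ρ for all s,t ∈ I. Then for any functions b₁, b₂ : [0,1] → I with finite ρ'-Hölder seminorms, [G∘b₁ − G∘b₂]_{ρ'} ≤ C₀ [b₁ − b₂]_{ρ'} + C₁ max{[b₁]_{ρ'}, [b₂]_{ρ'}} ‖b₁ − b₂‖∞^ρ. -/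
noncomputable section
open Set

/-- The set of Hölder difference quotients of exponent `ρ` of `f : [0,1] → ℝ`. -/
def hSet (ρ : ℝ) (f : ℝ → ℝ) : Set ℝ :=
  (fun p : ℝ × ℝ => |f p.1 - f p.2| / |p.1 - p.2| ^ ρ) ''
    {p : ℝ × ℝ | p.1 ∈ Set.Icc (0:ℝ) 1 ∧ p.2 ∈ Set.Icc (0:ℝ) 1 ∧ p.1 ≠ p.2}

/-- The `ρ`-Hölder seminorm `[f]_ρ` of `f : [0,1] → ℝ`. -/
def hSemi (ρ : ℝ) (f : ℝ → ℝ) : ℝ := sSup (hSet ρ f)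

/-- The sup norm `‖f‖_∞` of `f : [0,1] → ℝ`. -/
def supN (f : ℝ → ℝ) : ℝ := sSup ((fun x => |f x|) '' Set.Icc (0:ℝ) 1)

lemma hSet_nonneg (ρ : ℝ) (f : ℝ → ℝ) : ∀ z ∈ hSet ρ f, 0 ≤ z := by
  rintro z ⟨p, _, rfl⟩
  positivity

lemma hSemi_nonneg (ρ : ℝ) (f : ℝ → ℝ) : 0 ≤ hSemi ρ f :=
  Real.sSup_nonneg (hSet_nonneg ρ f)

lemma abs_sub_le_hSemi {ρ' : ℝ} (hρ' : 0 < ρ') {f : ℝ → ℝ} (hf : BddAbove (hSet ρ' f))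
    {x y : ℝ} (hx : x ∈ Set.Icc (0:ℝ) 1) (hy : y ∈ Set.Icc (0:ℝ) 1) :
    |f x - f y| ≤ hSemi ρ' f * |x - y| ^ ρ' := by
  rcases eq_or_ne x y with rfl | hne
  · simp [Real.zero_rpow hρ'.ne']
  · have hd : (0:ℝ) < |x - y| ^ ρ' :=
      Real.rpow_pos_of_pos (abs_pos.2 (sub_ne_zero.2 hne)) _
    have hmem : |f x - f y| / |x - y| ^ ρ' ∈ hSet ρ' f := ⟨(x, y), ⟨hx, hy, hne⟩, rfl⟩
    have h := le_csSup hf hmem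
    rw [div_le_iff₀ hd] at h
    exact h

lemma hSemi_of_constOn {ρ : ℝ} {f : ℝ → ℝ} {k : ℝ}
    (h : ∀ x ∈ Set.Icc (0:ℝ) 1, f x = k) : hSemi ρ f = 0 := by
  have hset : hSet ρ f = {0} := by
    ext z
    constructor
    · rintro ⟨p, ⟨h1, h2, _⟩, rfl⟩
      simp [h _ h1, h _ h2]
    · rintro rfl
      refine ⟨(0, 1), ⟨⟨le_refl _, zero_le_one⟩, ⟨zero_le_one, le_refl _⟩, by norm_num⟩, ?_⟩
      simp [h 0 (by norm_num), h 1 (by norm_num)]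
  rw [hSemi, hset, csSup_singleton]

lemma supN_of_zeroOn {f : ℝ → ℝ} (h : ∀ x ∈ Set.Icc (0:ℝ) 1, f x = 0) : supN f = 0 := by
  have hset : (fun x => |f x|) '' Set.Icc (0:ℝ) 1 = {0} := by
    ext z
    constructor
    · rintro ⟨x, hx, rfl⟩
      simp [h _ hx]
    · rintro rfl
      exact ⟨0, by norm_num, by simp [h 0 (by norm_num)]⟩
  rw [supN, hset, csSup_singleton]

/-- One-dimensional Hölder continuity of the composition (Lemma A.1 of the paper,
estimate (5.2)). -/
theorem holder_composition_one_dim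
    (ρ ρ' : ℝ) (hρ : ρ ∈ Set.Ioc (0:ℝ) 1) (hρ' : ρ' ∈ Set.Ioc (0:ℝ) ρ)
    (a c : ℝ) (hac : a ≤ c)
    (G G' : ℝ → ℝ) (C₀ C₁ : ℝ)
    (hG : ∀ t ∈ Set.Icc a c, HasDerivWithinAt G (G' t) (Set.Icc a c) t)
    (hC₀ : ∀ t ∈ Set.Icc a c, |G' t| ≤ C₀)
    (hC₁ : ∀ s ∈ Set.Icc a c, ∀ t ∈ Set.Icc a c, |G' s - G' t| ≤ C₁ * |s - t| ^ ρ)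
    (b₁ b₂ : ℝ → ℝ)
    (hb₁ : ∀ x ∈ Set.Icc (0:ℝ) 1, b₁ x ∈ Set.Icc a c)
    (hb₂ : ∀ x ∈ Set.Icc (0:ℝ) 1, b₂ x ∈ Set.Icc a c)
    (hfin₁ : BddAbove (hSet ρ' b₁)) (hfin₂ : BddAbove (hSet ρ' b₂)) :
    hSemi ρ' (fun x => G (b₁ x) - G (b₂ x)) ≤
      C₀ * hSemi ρ' (fun x => b₁ x - b₂ x)
        + C₁ * max (hSemi ρ' b₁) (hSemi ρ' b₂) * supN (fun x => b₁ x - b₂ x) ^ ρ := by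
  obtain ⟨hρ0, hρ1⟩ := hρ
  obtain ⟨hρ'0, hρ'ρ⟩ := hρ'
  -- degenerate case a = c
  rcases eq_or_lt_of_le hac with rfl | hlt
  · have hb₁' : ∀ x ∈ Set.Icc (0:ℝ) 1, b₁ x = a := by
      intro x hx; have := hb₁ x hx; rw [Set.Icc_self] at this; exact this
    have hb₂' : ∀ x ∈ Set.Icc (0:ℝ) 1, b₂ x = a := by
      intro x hx; have := hb₂ x hx; rw [Set.Icc_self] at this; exact this
    have h1 : hSemi ρ' (fun x => G (b₁ x) - G (b₂ x)) = 0 :=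
      hSemi_of_constOn (k := 0) (fun x hx => by simp [hb₁' x hx, hb₂' x hx])
    have h2 : hSemi ρ' (fun x => b₁ x - b₂ x) = 0 :=
      hSemi_of_constOn (k := 0) (fun x hx => by simp [hb₁' x hx, hb₂' x hx])
    have h3 : supN (fun x => b₁ x - b₂ x) = 0 :=
      supN_of_zeroOn (fun x hx => by simp [hb₁' x hx, hb₂' x hx])
    rw [h1, h2, h3, Real.zero_rpow hρ0.ne']
    ring_nf
    simp
  -- main case a < c
  have hC₀0 : 0 ≤ C₀ := le_trans (abs_nonneg _) (hC₀ a ⟨le_refl _, hac⟩)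
  have hC₁0 : 0 ≤ C₁ := by
    have h := hC₁ a ⟨le_refl _, hac⟩ c ⟨hac, le_refl _⟩
    have hp : (0:ℝ) < |a - c| ^ ρ :=
      Real.rpow_pos_of_pos (abs_pos.2 (sub_ne_zero.2 hlt.ne)) _
    nlinarith [abs_nonneg (G' a - G' c)]
  set w : ℝ → ℝ := fun x => b₁ x - b₂ x with hw
  -- boundedness of the Hölder set of w
  have hfinw : BddAbove (hSet ρ' w) := by
    refine ⟨hSemi ρ' b₁ + hSemi ρ' b₂, ?_⟩
    rintro z ⟨⟨x, y⟩, ⟨hx, hy, hne⟩, rfl⟩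
    have hd : (0:ℝ) < |x - y| ^ ρ' :=
      Real.rpow_pos_of_pos (abs_pos.2 (sub_ne_zero.2 hne)) _
    have h1 := abs_sub_le_hSemi hρ'0 hfin₁ hx hy
    have h2 := abs_sub_le_hSemi hρ'0 hfin₂ hx hy
    simp only [hw]
    rw [div_le_iff₀ hd]
    have : |b₁ x - b₂ x - (b₁ y - b₂ y)| ≤ |b₁ x - b₁ y| + |b₂ x - b₂ y| := by
      have := abs_sub (b₁ x - b₁ y) (b₂ x - b₂ y)
      calc |b₁ x - b₂ x - (b₁ y - b₂ y)| = |(b₁ x - b₁ y) - (b₂ x - b₂ y)| := by ring_nf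
        _ ≤ |b₁ x - b₁ y| + |b₂ x - b₂ y| := abs_sub _ _
    nlinarith
  have hsemiw0 : 0 ≤ hSemi ρ' w := hSemi_nonneg _ _
  -- boundedness of the sup-norm set of w, and the sup-norm bound
  have hbddN : BddAbove ((fun x => |w x|) '' Set.Icc (0:ℝ) 1) := by
    refine ⟨|w 0| + hSemi ρ' w, ?_⟩
    rintro z ⟨x, hx, rfl⟩
    have h1 : |w x - w 0| ≤ hSemi ρ' w * |x - 0| ^ ρ' :=
      abs_sub_le_hSemi hρ'0 hfinw hx ⟨le_refl _, zero_le_one⟩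
    have h2 : |x - 0| ^ ρ' ≤ 1 := by
      apply Real.rpow_le_one (abs_nonneg _) _ hρ'0.le
      rw [sub_zero, abs_of_nonneg hx.1]
      exact hx.2
    have h3 : |w x| ≤ |w 0| + |w x - w 0| := by
      calc |w x| = |w 0 + (w x - w 0)| := by ring_nf
        _ ≤ |w 0| + |w x - w 0| := abs_add_le _ _
    nlinarith
  have hsupNw : ∀ x ∈ Set.Icc (0:ℝ) 1, |w x| ≤ supN w :=
    fun x hx => le_csSup hbddN ⟨x, hx, rfl⟩
  have hsupN0 : 0 ≤ supN w :=
    le_trans (abs_nonneg _) (hsupNw 0 ⟨le_refl _, zero_le_one⟩)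
  set M := max (hSemi ρ' b₁) (hSemi ρ' b₂) with hM
  have hM0 : 0 ≤ M := le_trans (hSemi_nonneg ρ' b₁) (le_max_left _ _)
  -- continuity facts
  have hGc : ContinuousOn G (Set.Icc a c) := fun t ht => (hG t ht).continuousWithinAt
  have hG'c : ContinuousOn G' (Set.Icc a c) := by
    intro t ht
    rw [ContinuousWithinAt, tendsto_iff_dist_tendsto_zero]
    have hmaj : Filter.Tendsto (fun s => C₁ * |s - t| ^ ρ) (nhdsWithin t (Set.Icc a c)) (nhds 0) := by
      have hb : ContinuousAt (fun s : ℝ => |s - t|) t :=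
        (continuous_abs.comp (continuous_id.sub continuous_const)).continuousAt
      have hc : ContinuousAt (fun s : ℝ => C₁ * |s - t| ^ ρ) t := by
        have := ((Real.continuousAt_rpow_const _ ρ (Or.inr hρ0.le)).comp hb).const_mul C₁
        exact this
      have := hc.tendsto.mono_left (nhdsWithin_le_nhds (s := Set.Icc a c))
      simpa [Real.zero_rpow hρ0.ne'] using this
    apply squeeze_zero' (Filter.Eventually.of_forall (fun s => dist_nonneg))
      _ hmaj
    filter_upwards [self_mem_nhdsWithin] with s hs
    rw [Real.dist_eq]
    exact hC₁ s hs t ht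
  -- segment membership
  have hseg : ∀ u v : ℝ, u ∈ Set.Icc a c → v ∈ Set.Icc a c →
      ∀ t ∈ Set.Icc (0:ℝ) 1, u + t * (v - u) ∈ Set.Icc a c := by
    intro u v hu hv t ht
    have h := (convex_Icc a c) hu hv (by linarith [ht.2] : (0:ℝ) ≤ 1 - t) ht.1 (by ring)
    have he : (1 - t) • u + t • v = u + t * (v - u) := by
      simp only [smul_eq_mul]; ring
    rwa [he] at h
  -- the slope integrand is continuous, hence integrable
  have hScont : ∀ u v : ℝ, u ∈ Set.Icc a c → v ∈ Set.Icc a c →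
      ContinuousOn (fun t => G' (u + t * (v - u))) (Set.Icc (0:ℝ) 1) := by
    intro u v hu hv
    exact hG'c.comp ((continuous_const.add (continuous_id.mul continuous_const)).continuousOn)
      (fun t ht => hseg u v hu hv t ht)
  have hSint : ∀ u v : ℝ, u ∈ Set.Icc a c → v ∈ Set.Icc a c →
      IntervalIntegrable (fun t => G' (u + t * (v - u))) MeasureTheory.volume 0 1 :=
    fun u v hu hv => (hScont u v hu hv).intervalIntegrable_of_Icc zero_le_one
  -- the fundamental theorem of calculus identity
  have hSeq : ∀ u v : ℝ, u ∈ Set.Icc a c → v ∈ Set.Icc a c →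
      G v - G u = (∫ t in (0:ℝ)..1, G' (u + t * (v - u))) * (v - u) := by
    intro u v hu hv
    have key : ∫ t in (0:ℝ)..1, G' (u + t * (v - u)) * (v - u)
        = G (u + 1 * (v - u)) - G (u + 0 * (v - u)) := by
      apply intervalIntegral.integral_eq_sub_of_hasDeriv_right_of_le
        (f := fun t => G (u + t * (v - u)))
        (f' := fun t => G' (u + t * (v - u)) * (v - u)) zero_le_one
      · exact hGc.comp ((continuous_const.add (continuous_id.mul continuous_const)).continuousOn)
          (fun t ht => hseg u v hu hv t ht)
      · intro x hx
        have hl : HasDerivWithinAt (fun t : ℝ => u + t * (v - u)) (v - u) (Set.Icc 0 1) x := by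
          simpa using (((hasDerivAt_id x).mul_const (v - u)).const_add u).hasDerivWithinAt
            (s := Set.Icc (0:ℝ) 1)
        have hφ : HasDerivWithinAt (fun t => G (u + t * (v - u)))
            (G' (u + x * (v - u)) * (v - u)) (Set.Icc 0 1) x := by
          exact (hG _ (hseg u v hu hv x (Set.Ioo_subset_Icc_self hx))).comp x hl
            (fun t ht => hseg u v hu hv t ht)
        exact (hφ.hasDerivAt (Icc_mem_nhds hx.1 hx.2)).hasDerivWithinAt
      · exact (hSint u v hu hv).mul_const _
    rw [show u + 1 * (v - u) = v by ring, show u + 0 * (v - u) = u by ring,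
      intervalIntegral.integral_mul_const] at key
    exact key.symm
  -- bound on the slope
  have hSbd : ∀ u v : ℝ, u ∈ Set.Icc a c → v ∈ Set.Icc a c →
      |∫ t in (0:ℝ)..1, G' (u + t * (v - u))| ≤ C₀ := by
    intro u v hu hv
    have h := intervalIntegral.norm_integral_le_of_norm_le_const (C := C₀)
      (f := fun t => G' (u + t * (v - u))) (a := 0) (b := 1) ?_
    · simpa using h
    · intro t ht
      rw [Set.uIoc_of_le zero_le_one] at ht
      exact hC₀ _ (hseg u v hu hv t ⟨ht.1.le, ht.2⟩)
  -- Hölder bound on slope differences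
  have hSdiff : ∀ u₁ v₁ u₂ v₂ : ℝ, u₁ ∈ Set.Icc a c → v₁ ∈ Set.Icc a c →
      u₂ ∈ Set.Icc a c → v₂ ∈ Set.Icc a c → ∀ D : ℝ, 0 ≤ D →
      |u₁ - u₂| ≤ D → |v₁ - v₂| ≤ D →
      |(∫ t in (0:ℝ)..1, G' (u₁ + t * (v₁ - u₁)))
        - ∫ t in (0:ℝ)..1, G' (u₂ + t * (v₂ - u₂))| ≤ C₁ * D ^ ρ := by
    intro u₁ v₁ u₂ v₂ hu₁ hv₁ hu₂ hv₂ D hD0 hDu hDv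
    rw [← intervalIntegral.integral_sub (hSint u₁ v₁ hu₁ hv₁) (hSint u₂ v₂ hu₂ hv₂)]
    have h := intervalIntegral.norm_integral_le_of_norm_le_const (C := C₁ * D ^ ρ)
      (f := fun t => G' (u₁ + t * (v₁ - u₁)) - G' (u₂ + t * (v₂ - u₂))) (a := 0) (b := 1) ?_
    · simpa using h
    · intro t ht
      rw [Set.uIoc_of_le zero_le_one] at ht
      have ht' : t ∈ Set.Icc (0:ℝ) 1 := ⟨ht.1.le, ht.2⟩
      have hm₁ := hseg u₁ v₁ hu₁ hv₁ t ht'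
      have hm₂ := hseg u₂ v₂ hu₂ hv₂ t ht'
      have hstep : |u₁ + t * (v₁ - u₁) - (u₂ + t * (v₂ - u₂))| ≤ D := by
        have he : u₁ + t * (v₁ - u₁) - (u₂ + t * (v₂ - u₂))
            = (1 - t) * (u₁ - u₂) + t * (v₁ - v₂) := by ring
        rw [he]
        calc |(1 - t) * (u₁ - u₂) + t * (v₁ - v₂)|
            ≤ |(1 - t) * (u₁ - u₂)| + |t * (v₁ - v₂)| := abs_add_le _ _
          _ = (1 - t) * |u₁ - u₂| + t * |v₁ - v₂| := by
              rw [abs_mul, abs_mul, abs_of_nonneg (by linarith [ht.2] : (0:ℝ) ≤ 1 - t),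
                abs_of_nonneg ht.1.le]
          _ ≤ (1 - t) * D + t * D := by
              have h1 : (0:ℝ) ≤ 1 - t := by linarith [ht.2]
              nlinarith [ht.1.le]
          _ = D := by ring
      calc ‖G' (u₁ + t * (v₁ - u₁)) - G' (u₂ + t * (v₂ - u₂))‖
          ≤ C₁ * |u₁ + t * (v₁ - u₁) - (u₂ + t * (v₂ - u₂))| ^ ρ := hC₁ _ hm₁ _ hm₂
        _ ≤ C₁ * D ^ ρ := by
            apply mul_le_mul_of_nonneg_left _ hC₁0
            exact Real.rpow_le_rpow (abs_nonneg _) hstep hρ0.le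
  -- right-hand side is nonnegative
  have hRHS0 : 0 ≤ C₀ * hSemi ρ' w + C₁ * M * supN w ^ ρ := by
    have := Real.rpow_nonneg hsupN0 ρ
    positivity
  -- the main estimate
  apply Real.sSup_le _ hRHS0
  rintro z ⟨⟨x, y⟩, ⟨hx, hy, hne⟩, rfl⟩
  simp only
  have hd : (0:ℝ) < |x - y| ^ ρ' :=
    Real.rpow_pos_of_pos (abs_pos.2 (sub_ne_zero.2 hne)) _
  rw [div_le_iff₀ hd]
  set d := |x - y| ^ ρ' with hdd
  set S₁ := ∫ t in (0:ℝ)..1, G' (b₁ y + t * (b₁ x - b₁ y)) with hS₁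
  set S₂ := ∫ t in (0:ℝ)..1, G' (b₂ y + t * (b₂ x - b₂ y)) with hS₂
  have e1 : G (b₁ x) - G (b₁ y) = S₁ * (b₁ x - b₁ y) := hSeq _ _ (hb₁ y hy) (hb₁ x hx)
  have e2 : G (b₂ x) - G (b₂ y) = S₂ * (b₂ x - b₂ y) := hSeq _ _ (hb₂ y hy) (hb₂ x hx)
  have key : G (b₁ x) - G (b₂ x) - (G (b₁ y) - G (b₂ y))
      = S₁ * ((b₁ x - b₂ x) - (b₁ y - b₂ y)) + (S₁ - S₂) * (b₂ x - b₂ y) := by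
    have h : G (b₁ x) - G (b₂ x) - (G (b₁ y) - G (b₂ y))
        = (G (b₁ x) - G (b₁ y)) - (G (b₂ x) - G (b₂ y)) := by ring
    rw [h, e1, e2]; ring
  have hb₁S : |S₁| ≤ C₀ := hSbd _ _ (hb₁ y hy) (hb₁ x hx)
  have hwxy : |w x - w y| ≤ hSemi ρ' w * d := abs_sub_le_hSemi hρ'0 hfinw hx hy
  have hSd : |S₁ - S₂| ≤ C₁ * supN w ^ ρ :=
    hSdiff _ _ _ _ (hb₁ y hy) (hb₁ x hx) (hb₂ y hy) (hb₂ x hx) (supN w) hsupN0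
      (hsupNw y hy) (hsupNw x hx)
  have hb2xy : |b₂ x - b₂ y| ≤ M * d := by
    have h := abs_sub_le_hSemi hρ'0 hfin₂ hx hy
    have : hSemi ρ' b₂ ≤ M := le_max_right _ _
    nlinarith [hd.le]
  have hwx : w x = b₁ x - b₂ x := rfl
  have hwy : w y = b₁ y - b₂ y := rfl
  calc |G (b₁ x) - G (b₂ x) - (G (b₁ y) - G (b₂ y))|
      = |S₁ * (w x - w y) + (S₁ - S₂) * (b₂ x - b₂ y)| := by rw [key, hwx, hwy]
    _ ≤ |S₁| * |w x - w y| + |S₁ - S₂| * |b₂ x - b₂ y| := by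
        calc |S₁ * (w x - w y) + (S₁ - S₂) * (b₂ x - b₂ y)|
            ≤ |S₁ * (w x - w y)| + |(S₁ - S₂) * (b₂ x - b₂ y)| := abs_add_le _ _
          _ = |S₁| * |w x - w y| + |S₁ - S₂| * |b₂ x - b₂ y| := by rw [abs_mul, abs_mul]
    _ ≤ C₀ * (hSemi ρ' w * d) + (C₁ * supN w ^ ρ) * (M * d) := by
        apply add_le_add
        · exact mul_le_mul hb₁S hwxy (abs_nonneg _) hC₀0
        · exact mul_le_mul hSd hb2xy (abs_nonneg _)
            (by positivity)
    _ = (C₀ * hSemi ρ' w + C₁ * M * supN w ^ ρ) * d := by ring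
end
end

section
/- Let α ∈ (0,1], 0 < m₁ ≤ m₂, and M, K, K' ≥ 0. Then there exists a constant L, depending only on α, m₁, m₂, M, K, K', with the following property. For every differentiable ψ : ℝ² → ℝ with |ψ| ≤ M, |∇ψ| ≤ K, and ∇ψ Lipschitz with constant K', define a(ξ) := |ξ|^{−2} ψ(ξ/|ξ|) for ξ ≠ 0. Then for all v', v'' : [0,1] → ℝ² satisfying m₁ ≤ |v(x)| ≤ m₂ for all x and [v]_α ≤ m₂ (for v ∈ {v',v''}), one has ‖a∘v' − a∘v''‖∞ ≤ L ‖v' − v''‖∞ and [a∘v' − a∘v'']_α ≤ L (‖v' − v''‖∞ + [v' − v'']_α). -/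
noncomputable section
open Set

/-- The coefficient `a(ξ) = |ξ|⁻² ψ(ξ/|ξ|)` of the quasilinear parabolic system. -/
def coeffA (ψ : E2 → ℝ) (ξ : E2) : ℝ := (‖ξ‖ ^ 2)⁻¹ * ψ (‖ξ‖⁻¹ • ξ)

/-- The `ρ`-Hölder seminorm `[f]_ρ` of a vector-valued `f : [0,1] → ℝ²`. -/
def hSemiE (ρ : ℝ) (f : ℝ → E2) : ℝ :=
  sSup ((fun p : ℝ × ℝ => ‖f p.1 - f p.2‖ / |p.1 - p.2| ^ ρ) ''
    {p : ℝ × ℝ | p.1 ∈ Set.Icc (0:ℝ) 1 ∧ p.2 ∈ Set.Icc (0:ℝ) 1 ∧ p.1 ≠ p.2})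

/-- The sup norm `‖f‖_∞` of `f : [0,1] → ℝ²`. -/
def supNE (f : ℝ → E2) : ℝ := sSup ((fun x => ‖f x‖) '' Set.Icc (0:ℝ) 1)

/-!
On the annulus `r ≤ ‖ξ‖ ≤ R`, the coefficient `a ξ = (‖ξ‖ ^ 2)⁻¹ * ψ (‖ξ‖⁻¹ • ξ)` is assembled
from `ξ ↦ ‖ξ‖ ^ 2`, smooth functions of one variable on `[r², R²]`, the identity and `ψ` by
products and compositions. Each building block satisfies bounds of `C^{1,1}` type on its domain (a
sup bound, a Lipschitz bound and a bound on the second difference `a p - a q - (a p' - a q')`), and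
such bounds propagate through products and compositions, with constants that depend on `ψ` only
through `M`, `K`, `K'`. With `p = v' x`, `q = v'' x`, `p' = v' y`, `q' = v'' y`, the Lipschitz bound
gives the sup-norm estimate and the second-difference bound the Hölder estimate.
-/

open NNReal Metric ContinuousLinearMap

section C11

variable {E F G 𝕜 : Type*} [NormedAddCommGroup E] [NormedAddCommGroup F] [NormedAddCommGroup G]

/-- The second-difference bound of a `C^{1,1}` function on a convex set
(`C11BoundsOn.of_hasFDerivAt`); unlike `C^{1,1}` itself it makes sense on the non-convex annulus and
survives products and compositions. -/
def SecondDiffOnWith (C : ℝ≥0) (f : E → F) (s : Set E) : Prop :=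
  ∀ ⦃p⦄, p ∈ s → ∀ ⦃q⦄, q ∈ s → ∀ ⦃p'⦄, p' ∈ s → ∀ ⦃q'⦄, q' ∈ s →
    ‖f p - f q - (f p' - f q')‖ ≤ C * (‖p - q - (p' - q')‖ + (‖p - p'‖ + ‖q - q'‖) * ‖p' - q'‖)

structure C11BoundsOn (B L C : ℝ≥0) (f : E → F) (s : Set E) : Prop where
  norm_le : ∀ x ∈ s, ‖f x‖ ≤ B
  lipschitzOnWith : LipschitzOnWith L f s
  secondDiffOnWith : SecondDiffOnWith C f s

variable {B L C Bf Lf Cf Bg Lg Cg : ℝ≥0} {s : Set E}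

theorem C11BoundsOn.mono {f : E → F} {t : Set E} (hf : C11BoundsOn B L C f t) (hst : s ⊆ t) :
    C11BoundsOn B L C f s where
  norm_le x hx := hf.norm_le x (hst hx)
  lipschitzOnWith := hf.lipschitzOnWith.mono hst
  secondDiffOnWith _ hp _ hq _ hp' _ hq' :=
    hf.secondDiffOnWith (hst hp) (hst hq) (hst hp') (hst hq')

theorem c11BoundsOn_id (hs : ∀ x ∈ s, ‖x‖ ≤ B) : C11BoundsOn B 1 1 id s where
  norm_le := hs
  lipschitzOnWith := LipschitzWith.id.lipschitzOnWith
  secondDiffOnWith p _ q _ p' _ q' _ := by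
    simp only [id, NNReal.coe_one, one_mul]
    exact le_add_of_nonneg_right (by positivity)

theorem C11BoundsOn.comp {g : F → G} {f : E → F} {t : Set F} (hg : C11BoundsOn Bg Lg Cg g t)
    (hf : C11BoundsOn Bf Lf Cf f s) (hst : MapsTo f s t) :
    C11BoundsOn Bg (Lg * Lf) (Cg * (Cf + Lf ^ 2)) (g ∘ f) s where
  norm_le x hx := hg.norm_le _ (hst hx)
  lipschitzOnWith := hg.lipschitzOnWith.comp hf.lipschitzOnWith hst
  secondDiffOnWith p hp q hq p' hp' q' hq' := by
    set δ := ‖p - q - (p' - q')‖ + (‖p - p'‖ + ‖q - q'‖) * ‖p' - q'‖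
    have hprod : (‖p - p'‖ + ‖q - q'‖) * ‖p' - q'‖ ≤ δ := le_add_of_nonneg_left (norm_nonneg _)
    have hfL := hf.lipschitzOnWith.norm_sub_le
    calc ‖g (f p) - g (f q) - (g (f p') - g (f q'))‖
        ≤ Cg * (‖f p - f q - (f p' - f q')‖ + (‖f p - f p'‖ + ‖f q - f q'‖) * ‖f p' - f q'‖) :=
          hg.secondDiffOnWith (hst hp) (hst hq) (hst hp') (hst hq')
      _ ≤ Cg * (Cf * δ + (Lf * ‖p - p'‖ + Lf * ‖q - q'‖) * (Lf * ‖p' - q'‖)) := by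
          gcongr
          exacts [hf.secondDiffOnWith hp hq hp' hq', hfL hp hp', hfL hq hq', hfL hp' hq']
      _ = Cg * (Cf * δ + Lf ^ 2 * ((‖p - p'‖ + ‖q - q'‖) * ‖p' - q'‖)) := by ring
      _ ≤ Cg * (Cf * δ + Lf ^ 2 * δ) := by gcongr
      _ = (Cg * (Cf + Lf ^ 2) : ℝ≥0) * δ := by push_cast; ring

theorem C11BoundsOn.smul [NormedField 𝕜] [NormedSpace 𝕜 F] {f : E → 𝕜} {g : E → F}
    (hf : C11BoundsOn Bf Lf Cf f s) (hg : C11BoundsOn Bg Lg Cg g s) :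
    C11BoundsOn (Bf * Bg) (Lf * Bg + Bf * Lg) (Cf * Bg + Bf * Cg + Lf * Lg)
      (fun x => f x • g x) s where
  norm_le x hx := by
    rw [norm_smul, NNReal.coe_mul]
    exact mul_le_mul (hf.norm_le x hx) (hg.norm_le x hx) (norm_nonneg _) Bf.coe_nonneg
  lipschitzOnWith := by
    refine lipschitzOnWith_iff_norm_sub_le.2 fun p hp q hq => ?_
    have hfL := hf.lipschitzOnWith.norm_sub_le hp hq
    have hgL := hg.lipschitzOnWith.norm_sub_le hp hq
    calc ‖f p • g p - f q • g q‖ = ‖(f p - f q) • g p + f q • (g p - g q)‖ := by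
          rw [sub_smul, smul_sub]; abel_nf
      _ ≤ ‖f p - f q‖ * ‖g p‖ + ‖f q‖ * ‖g p - g q‖ := by
          rw [← norm_smul, ← norm_smul]; exact norm_add_le _ _
      _ ≤ (Lf * ‖p - q‖) * Bg + Bf * (Lg * ‖p - q‖) := by
          gcongr
          exacts [hg.norm_le p hp, hf.norm_le q hq]
      _ = (Lf * Bg + Bf * Lg : ℝ≥0) * ‖p - q‖ := by push_cast; ring
  secondDiffOnWith p hp q hq p' hp' q' hq' := by
    set δ := ‖p - q - (p' - q')‖ + (‖p - p'‖ + ‖q - q'‖) * ‖p' - q'‖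
    have hprod : (‖p - p'‖ + ‖q - q'‖) * ‖p' - q'‖ ≤ δ := le_add_of_nonneg_left (norm_nonneg _)
    have hfL := hf.lipschitzOnWith.norm_sub_le
    have hgL := hg.lipschitzOnWith.norm_sub_le
    -- discrete Leibniz rule for second differences
    have hsplit : f p • g p - f q • g q - (f p' • g p' - f q' • g q') =
        (f p - f q - (f p' - f q')) • g p + (f p' - f q') • (g p - g p') +
          f q • (g p - g q - (g p' - g q')) + (f q - f q') • (g p' - g q') := by
      simp only [sub_smul, smul_sub]; abel
    calc ‖f p • g p - f q • g q - (f p' • g p' - f q' • g q')‖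
        ≤ ‖f p - f q - (f p' - f q')‖ * ‖g p‖ + ‖f p' - f q'‖ * ‖g p - g p'‖ +
          ‖f q‖ * ‖g p - g q - (g p' - g q')‖ + ‖f q - f q'‖ * ‖g p' - g q'‖ := by
          rw [hsplit, ← norm_smul, ← norm_smul, ← norm_smul, ← norm_smul]
          exact norm_add₄_le
      _ ≤ (Cf * δ) * Bg + (Lf * ‖p' - q'‖) * (Lg * ‖p - p'‖) + Bf * (Cg * δ) +
          (Lf * ‖q - q'‖) * (Lg * ‖p' - q'‖) := by
          gcongr
          exacts [hf.secondDiffOnWith hp hq hp' hq', hg.norm_le p hp, hfL hp' hq', hgL hp hp',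
            hf.norm_le q hq, hg.secondDiffOnWith hp hq hp' hq', hfL hq hq', hgL hp' hq']
      _ = (Cf * Bg + Bf * Cg) * δ + Lf * Lg * ((‖p - p'‖ + ‖q - q'‖) * ‖p' - q'‖) := by ring
      _ ≤ (Cf * Bg + Bf * Cg) * δ + Lf * Lg * δ := by gcongr
      _ = (Cf * Bg + Bf * Cg + Lf * Lg : ℝ≥0) * δ := by push_cast; ring

end C11

theorem IsCompact.exists_nnreal_bound_of_continuousOn {X F : Type*} [TopologicalSpace X]
    [SeminormedAddCommGroup F] {s : Set X} (hs : IsCompact s) {g : X → F}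
    (hg : ContinuousOn g s) : ∃ B : ℝ≥0, ∀ x ∈ s, ‖g x‖ ≤ B := by
  obtain ⟨B, hB⟩ := hs.exists_bound_of_continuousOn hg
  exact ⟨B.toNNReal, fun x hx => (hB x hx).trans (Real.le_coe_toNNReal B)⟩

section Calculus

variable {E F : Type*} [NormedAddCommGroup E] [NormedSpace ℝ E] [NormedAddCommGroup F]
  [NormedSpace ℝ F] {f : E → F} {s : Set E}

theorem norm_add_smul_sub_sub_add_smul_sub_le {p q p' q' : E} {t : ℝ} (ht : t ∈ Icc (0 : ℝ) 1) :
    ‖q + t • (p - q) - (q' + t • (p' - q'))‖ ≤ ‖p - p'‖ + ‖q - q'‖ := by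
  obtain ⟨ht₀, ht₁⟩ := ht
  have : q + t • (p - q) - (q' + t • (p' - q')) = (1 - t) • (q - q') + t • (p - p') := by
    simp only [sub_smul, smul_sub, one_smul]; abel
  rw [this]
  refine (norm_add_le _ _).trans ?_
  rw [norm_smul, norm_smul, Real.norm_of_nonneg ht₀, Real.norm_of_nonneg (by linarith)]
  nlinarith [norm_nonneg (p - p'), norm_nonneg (q - q')]

theorem C11BoundsOn.of_hasFDerivAt {f' : E → E →L[ℝ] F} {B K K' : ℝ≥0} (hs : Convex ℝ s)
    (hf : ∀ x ∈ s, HasFDerivAt f (f' x) x) (hB : ∀ x ∈ s, ‖f x‖ ≤ B)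
    (hK : ∀ x ∈ s, ‖f' x‖ ≤ K) (hK' : LipschitzOnWith K' f' s) :
    C11BoundsOn B K (max K K') f s where
  norm_le := hB
  lipschitzOnWith := hs.lipschitzOnWith_of_nnnorm_hasFDerivWithin_le
    (fun x hx => (hf x hx).hasFDerivWithinAt) fun x hx => hK x hx
  secondDiffOnWith p hp q hq p' hp' q' hq' := by
    -- mean value theorem for `f (x t) - f (y t)` as `x t` and `y t` run simultaneously through the
    -- segments `[q, p]` and `[q', p']`; the two points stay within `‖p - p'‖ + ‖q - q'‖`
    set x : ℝ → E := fun t => q + t • (p - q)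
    set y : ℝ → E := fun t => q' + t • (p' - q')
    have hxs : ∀ t ∈ Icc (0 : ℝ) 1, x t ∈ s := fun t ht => hs.add_smul_sub_mem hq hp ht
    have hys : ∀ t ∈ Icc (0 : ℝ) 1, y t ∈ s := fun t ht => hs.add_smul_sub_mem hq' hp' ht
    have hderiv : ∀ t ∈ Icc (0 : ℝ) 1, HasDerivWithinAt (fun t => f (x t) - f (y t))
        (f' (x t) (p - q) - f' (y t) (p' - q')) (Icc 0 1) t := by
      intro t ht
      have hline : ∀ a b : E, HasDerivAt (fun t : ℝ => a + t • b) b t := fun a b => by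
        simpa using ((hasDerivAt_id t).smul_const b).const_add a
      exact (((hf _ (hxs t ht)).comp_hasDerivAt t (hline q (p - q))).sub
        ((hf _ (hys t ht)).comp_hasDerivAt t (hline q' (p' - q')))).hasDerivWithinAt
    have hbound : ∀ t ∈ Ico (0 : ℝ) 1, ‖f' (x t) (p - q) - f' (y t) (p' - q')‖ ≤
        max K K' * (‖p - q - (p' - q')‖ + (‖p - p'‖ + ‖q - q'‖) * ‖p' - q'‖) := by
      intro t ht
      have ht' := Ico_subset_Icc_self ht
      have hsplit : f' (x t) (p - q) - f' (y t) (p' - q') =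
          f' (x t) (p - q - (p' - q')) + (f' (x t) - f' (y t)) (p' - q') := by
        simp only [map_sub, sub_apply]; abel
      rw [hsplit]
      calc _ ≤ ‖f' (x t)‖ * ‖p - q - (p' - q')‖ + ‖f' (x t) - f' (y t)‖ * ‖p' - q'‖ :=
            (norm_add_le _ _).trans (add_le_add (le_opNorm _ _) (le_opNorm _ _))
        _ ≤ K * ‖p - q - (p' - q')‖ + (K' * (‖p - p'‖ + ‖q - q'‖)) * ‖p' - q'‖ := by
            gcongr
            · exact hK _ (hxs t ht')
            · exact (hK'.norm_sub_le (hxs t ht') (hys t ht')).trans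
                (by gcongr; exact norm_add_smul_sub_sub_add_smul_sub_le ht')
        _ ≤ _ := by
            rw [mul_assoc, mul_add]
            gcongr
            exacts [le_max_left _ _, le_max_right _ _]
    have := norm_image_sub_le_of_norm_deriv_le_segment_01' hderiv hbound
    simp only [x, y, zero_smul, add_zero, one_smul, add_sub_cancel] at this
    rwa [sub_sub_sub_comm] at this

theorem ContDiffOn.exists_c11BoundsOn {U : Set E} (hf : ContDiffOn ℝ 2 f U) (hU : IsOpen U)
    (hs : IsCompact s) (hsc : Convex ℝ s) (hsU : s ⊆ U) : ∃ B L C, C11BoundsOn B L C f s := by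
  obtain ⟨B, hB⟩ := hs.exists_nnreal_bound_of_continuousOn (hf.continuousOn.mono hsU)
  obtain ⟨K, hK⟩ := hs.exists_nnreal_bound_of_continuousOn
    ((hf.continuousOn_fderiv_of_isOpen hU one_le_two).mono hsU)
  obtain ⟨K', hK'⟩ :=
    ((hf.fderiv_of_isOpen hU (m := 1) le_rfl).mono hsU).exists_lipschitzOnWith one_ne_zero hsc hs
  refine ⟨B, _, _, .of_hasFDerivAt hsc (fun x hx => ?_) hB hK hK'⟩
  exact ((hf.contDiffAt (hU.mem_nhds (hsU hx))).differentiableAt two_ne_zero).hasFDerivAt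

end Calculus

section Annulus

variable {E F : Type*} [NormedAddCommGroup E] [InnerProductSpace ℝ E] [NormedAddCommGroup F]
  [NormedSpace ℝ F]

def annulus (r R : ℝ) : Set E := {x | r ≤ ‖x‖ ∧ ‖x‖ ≤ R}

theorem c11BoundsOn_norm_sq_closedBall (R : ℝ≥0) :
    C11BoundsOn (R ^ 2) (2 * R) (max (2 * R) 2) (fun x : E => ‖x‖ ^ 2) (closedBall 0 R) := by
  refine .of_hasFDerivAt (convex_closedBall 0 R)
    (fun x _ => (hasStrictFDerivAt_norm_sq x).hasFDerivAt) (fun x hx => ?_) (fun x hx => ?_)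
    (LipschitzWith.of_dist_le_mul fun x y => ?_).lipschitzOnWith
  · rw [mem_closedBall_zero_iff] at hx
    rw [norm_pow, norm_norm, NNReal.coe_pow]
    gcongr
  · rw [mem_closedBall_zero_iff] at hx
    refine norm_nsmul_le.trans ?_
    rw [innerSL_apply_norm, NNReal.coe_mul]
    gcongr
    norm_num
  · rw [dist_eq_norm, dist_eq_norm, ← smul_sub, ← map_sub]
    refine norm_nsmul_le.trans ?_
    rw [innerSL_apply_norm]
    norm_num

theorem ContDiffOn.exists_c11BoundsOn_comp_norm_sq {φ : ℝ → F} (hφ : ContDiffOn ℝ 2 φ (Ioi 0))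
    {r : ℝ} (hr : 0 < r) (R : ℝ≥0) :
    ∃ B L C, C11BoundsOn B L C (fun x : E => φ (‖x‖ ^ 2)) (annulus r R) := by
  obtain ⟨B, L, C, hφC⟩ := hφ.exists_c11BoundsOn isOpen_Ioi isCompact_Icc
    (convex_Icc (r ^ 2) (R ^ 2)) fun t ht => (pow_pos hr 2).trans_le ht.1
  have hsq : C11BoundsOn _ _ _ (fun x : E => ‖x‖ ^ 2) (annulus r R) :=
    (c11BoundsOn_norm_sq_closedBall R).mono fun x hx => mem_closedBall_zero_iff.2 hx.2
  exact ⟨_, _, _, hφC.comp hsq fun x hx =>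
    ⟨pow_le_pow_left₀ hr.le hx.1 2, pow_le_pow_left₀ (norm_nonneg x) hx.2 2⟩⟩

end Annulus

theorem Differentiable.c11BoundsOn_univ {E F : Type*} [NormedAddCommGroup E] [NormedSpace ℝ E]
    [NormedAddCommGroup F] [NormedSpace ℝ F] {ψ : E → F} {B K K' : ℝ≥0}
    (hψ : Differentiable ℝ ψ) (hB : ∀ x, ‖ψ x‖ ≤ B) (hK : ∀ x, ‖fderiv ℝ ψ x‖ ≤ K)
    (hK' : LipschitzWith K' (fderiv ℝ ψ)) : C11BoundsOn B K (max K K') ψ univ :=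
  .of_hasFDerivAt convex_univ (fun x _ => (hψ x).hasFDerivAt) (fun x _ => hB x) (fun x _ => hK x)
    hK'.lipschitzOnWith

theorem exists_c11BoundsOn_coeffA {r : ℝ} (hr : 0 < r) (R M K K' : ℝ≥0) :
    ∃ B L C : ℝ≥0, ∀ ψ : E2 → ℝ, Differentiable ℝ ψ → (∀ u, |ψ u| ≤ M) →
      (∀ u, ‖fderiv ℝ ψ u‖ ≤ K) → LipschitzWith K' (fderiv ℝ ψ) →
        C11BoundsOn B L C (coeffA ψ) (annulus r R) := by
  obtain ⟨B₁, L₁, C₁, hinvSq⟩ :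
      ∃ B L C, C11BoundsOn B L C (fun x : E2 => (‖x‖ ^ 2)⁻¹) (annulus r R) :=
    ((contDiffOn_inv ℝ).mono fun t (ht : 0 < t) => ht.ne').exists_c11BoundsOn_comp_norm_sq
      (E := E2) hr R
  obtain ⟨B₂, L₂, C₂, hinvNorm⟩ :
      ∃ B L C, C11BoundsOn B L C (fun x : E2 => ‖x‖⁻¹) (annulus r R) := by
    have hφ : ContDiffOn ℝ 2 (fun t : ℝ => (√t)⁻¹) (Ioi 0) := fun t (ht : 0 < t) =>
      ((Real.contDiffAt_sqrt ht.ne').inv (Real.sqrt_pos.2 ht).ne').contDiffWithinAt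
    simpa only [Real.sqrt_sq (norm_nonneg _)] using
      hφ.exists_c11BoundsOn_comp_norm_sq (E := E2) hr R
  have hnormalize := hinvNorm.smul (c11BoundsOn_id fun x (hx : x ∈ annulus r R) => hx.2)
  exact ⟨_, _, _, fun ψ hψ hM hK hK' => hinvSq.smul <|
    (hψ.c11BoundsOn_univ (fun x => (Real.norm_eq_abs _).trans_le (hM x)) hK hK').comp
      hnormalize (mapsTo_univ _ _)⟩

section SupNorms

variable {f : ℝ → E2} {ρ B : ℝ}

theorem supNE_nonneg : 0 ≤ supNE f :=
  Real.sSup_nonneg <| forall_mem_image.2 fun _ _ => norm_nonneg _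

theorem hSemiE_nonneg : 0 ≤ hSemiE ρ f :=
  Real.sSup_nonneg <| forall_mem_image.2 fun _ _ => by positivity

theorem norm_le_supNE (hB : ∀ x ∈ Icc (0 : ℝ) 1, ‖f x‖ ≤ B) {x : ℝ} (hx : x ∈ Icc (0 : ℝ) 1) :
    ‖f x‖ ≤ supNE f :=
  le_csSup ⟨B, forall_mem_image.2 hB⟩ (mem_image_of_mem _ hx)

theorem norm_sub_le_hSemiE_mul
    (hB : ∀ x ∈ Icc (0 : ℝ) 1, ∀ y ∈ Icc (0 : ℝ) 1, ‖f x - f y‖ ≤ B * |x - y| ^ ρ) {x y : ℝ}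
    (hx : x ∈ Icc (0 : ℝ) 1) (hy : y ∈ Icc (0 : ℝ) 1) :
    ‖f x - f y‖ ≤ hSemiE ρ f * |x - y| ^ ρ := by
  rcases eq_or_ne x y with rfl | hxy
  · simpa using mul_nonneg hSemiE_nonneg (Real.rpow_nonneg (abs_nonneg (x - x)) ρ)
  have ht : 0 < |x - y| ^ ρ := Real.rpow_pos_of_pos (abs_pos.2 (sub_ne_zero.2 hxy)) ρ
  rw [← div_le_iff₀ ht, hSemiE]
  refine le_csSup ⟨B, ?_⟩ ⟨(x, y), ⟨hx, hy, hxy⟩, rfl⟩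
  rintro _ ⟨⟨a, b⟩, ⟨ha, hb, hab⟩, rfl⟩
  exact (div_le_iff₀ (Real.rpow_pos_of_pos (abs_pos.2 (sub_ne_zero.2 hab)) ρ)).2 (hB a ha b hb)

variable {a : E2 → ℝ} {S : Set E2} {v' v'' : ℝ → E2} {L C m : ℝ≥0}

theorem LipschitzOnWith.supN_comp_sub_le (ha : LipschitzOnWith L a S)
    (hv' : MapsTo v' (Icc 0 1) S) (hv'' : MapsTo v'' (Icc 0 1) S)
    (hB : ∀ x ∈ Icc (0 : ℝ) 1, ‖v' x - v'' x‖ ≤ B) :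
    supN (fun x => a (v' x) - a (v'' x)) ≤ L * supNE (fun x => v' x - v'' x) := by
  refine Real.sSup_le (forall_mem_image.2 fun x hx => ?_) (mul_nonneg L.coe_nonneg supNE_nonneg)
  calc |a (v' x) - a (v'' x)| ≤ L * ‖v' x - v'' x‖ := ha.norm_sub_le (hv' hx) (hv'' hx)
    _ ≤ L * supNE (fun x => v' x - v'' x) := by gcongr; exact norm_le_supNE hB hx

theorem SecondDiffOnWith.hSemi_comp_sub_le (ha : SecondDiffOnWith C a S)
    (hv' : MapsTo v' (Icc 0 1) S) (hv'' : MapsTo v'' (Icc 0 1) S)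
    (hv'ρ : ∀ x ∈ Icc (0 : ℝ) 1, ∀ y ∈ Icc (0 : ℝ) 1, ‖v' x - v' y‖ ≤ m * |x - y| ^ ρ)
    (hv''ρ : ∀ x ∈ Icc (0 : ℝ) 1, ∀ y ∈ Icc (0 : ℝ) 1, ‖v'' x - v'' y‖ ≤ m * |x - y| ^ ρ)
    (hB : ∀ x ∈ Icc (0 : ℝ) 1, ‖v' x - v'' x‖ ≤ B) :
    hSemi ρ (fun x => a (v' x) - a (v'' x)) ≤
      C * (hSemiE ρ (fun x => v' x - v'' x) + 2 * m * supNE (fun x => v' x - v'' x)) := by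
  set w := fun x => v' x - v'' x
  have hw : ∀ x ∈ Icc (0 : ℝ) 1, ∀ y ∈ Icc (0 : ℝ) 1, ‖w x - w y‖ ≤ 2 * m * |x - y| ^ ρ :=
    fun x hx y hy => by
      rw [sub_sub_sub_comm]
      linarith [norm_sub_le (v' x - v' y) (v'' x - v'' y), hv'ρ x hx y hy, hv''ρ x hx y hy]
  have hbound : 0 ≤ C * (hSemiE ρ w + 2 * m * supNE w) :=
    mul_nonneg C.coe_nonneg (add_nonneg hSemiE_nonneg (mul_nonneg (by positivity) supNE_nonneg))
  refine Real.sSup_le ?_ hbound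
  rintro _ ⟨⟨x, y⟩, ⟨hx, hy, hxy⟩, rfl⟩
  have ht : 0 < |x - y| ^ ρ := Real.rpow_pos_of_pos (abs_pos.2 (sub_ne_zero.2 hxy)) ρ
  refine div_le_of_le_mul₀ ht.le hbound ?_
  have hincr : ‖v' x - v' y‖ + ‖v'' x - v'' y‖ ≤ 2 * m * |x - y| ^ ρ := by
    linarith [hv'ρ x hx y hy, hv''ρ x hx y hy]
  calc |a (v' x) - a (v'' x) - (a (v' y) - a (v'' y))|
      ≤ C * (‖w x - w y‖ + (‖v' x - v' y‖ + ‖v'' x - v'' y‖) * ‖w y‖) :=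
        ha (hv' hx) (hv'' hx) (hv' hy) (hv'' hy)
    _ ≤ C * (hSemiE ρ w * |x - y| ^ ρ + 2 * m * |x - y| ^ ρ * supNE w) := by
        gcongr ?_ * (?_ + ?_)
        · exact norm_sub_le_hSemiE_mul hw hx hy
        · exact mul_le_mul hincr (norm_le_supNE hB hy) (norm_nonneg _)
            ((add_nonneg (norm_nonneg _) (norm_nonneg _)).trans hincr)
    _ = _ := by ring

end SupNorms

theorem coeff_holder_estimates_general
    (α : ℝ)
    (m₁ m₂ M K K' : ℝ) (hm₁ : 0 < m₁) (hm₁₂ : m₁ ≤ m₂)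
    (hM : 0 ≤ M) (hK : 0 ≤ K) (hK' : 0 ≤ K') :
    ∃ L : ℝ, ∀ ψ : E2 → ℝ, Differentiable ℝ ψ →
      (∀ u : E2, |ψ u| ≤ M) →
      (∀ u : E2, ‖fderiv ℝ ψ u‖ ≤ K) →
      (∀ u v : E2, ‖fderiv ℝ ψ u - fderiv ℝ ψ v‖ ≤ K' * ‖u - v‖) →
      ∀ v' v'' : ℝ → E2,
        (∀ x ∈ Set.Icc (0:ℝ) 1, m₁ ≤ ‖v' x‖ ∧ ‖v' x‖ ≤ m₂) →
        (∀ x ∈ Set.Icc (0:ℝ) 1, m₁ ≤ ‖v'' x‖ ∧ ‖v'' x‖ ≤ m₂) →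
        (∀ x ∈ Set.Icc (0:ℝ) 1, ∀ y ∈ Set.Icc (0:ℝ) 1,
           ‖v' x - v' y‖ ≤ m₂ * |x - y| ^ α) →
        (∀ x ∈ Set.Icc (0:ℝ) 1, ∀ y ∈ Set.Icc (0:ℝ) 1,
           ‖v'' x - v'' y‖ ≤ m₂ * |x - y| ^ α) →
        supN (fun x => coeffA ψ (v' x) - coeffA ψ (v'' x))
            ≤ L * supNE (fun x => v' x - v'' x)
          ∧ hSemi α (fun x => coeffA ψ (v' x) - coeffA ψ (v'' x))
            ≤ L * (supNE (fun x => v' x - v'' x)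
                + hSemiE α (fun x => v' x - v'' x)) := by
  have hm₂ : 0 ≤ m₂ := hm₁.le.trans hm₁₂
  obtain ⟨_, L, C, hcoeff⟩ :=
    exists_c11BoundsOn_coeffA hm₁ ⟨m₂, hm₂⟩ ⟨M, hM⟩ ⟨K, hK⟩ ⟨K', hK'⟩
  refine ⟨L + C * (1 + 2 * m₂), fun ψ hψ hψM hψK hψK' v' v'' hv' hv'' hv'α hv''α => ?_⟩
  obtain ⟨-, hL, hC⟩ := hcoeff ψ hψ hψM hψK <|
    LipschitzWith.of_dist_le_mul fun u v => by rw [dist_eq_norm, dist_eq_norm]; exact hψK' u v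
  have hB : ∀ x ∈ Icc (0 : ℝ) 1, ‖v' x - v'' x‖ ≤ 2 * m₂ := fun x hx =>
    (norm_sub_le _ _).trans (by linarith [(hv' x hx).2, (hv'' x hx).2])
  have hW := supNE_nonneg (f := fun x => v' x - v'' x)
  have hH := hSemiE_nonneg (ρ := α) (f := fun x => v' x - v'' x)
  constructor
  · calc _ ≤ L * supNE (fun x => v' x - v'' x) := hL.supN_comp_sub_le hv' hv'' hB
      _ ≤ _ := by
          nlinarith [mul_nonneg C.coe_nonneg hW, mul_nonneg (mul_nonneg C.coe_nonneg hm₂) hW]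
  · calc _ ≤ C * (hSemiE α (fun x => v' x - v'' x) + 2 * m₂ * supNE (fun x => v' x - v'' x)) :=
          hC.hSemi_comp_sub_le (m := ⟨m₂, hm₂⟩) hv' hv'' hv'α hv''α hB
      _ ≤ _ := by
          nlinarith [mul_nonneg L.coe_nonneg hW, mul_nonneg L.coe_nonneg hH,
            mul_nonneg C.coe_nonneg hW, mul_nonneg (mul_nonneg C.coe_nonneg hm₂) hH]

/-- The spatial part of Lemma A.2 of the paper (estimates (5.3)–(5.5)):
Lipschitz and Hölder-seminorm continuity of `v ↦ a∘v` on the set of `α`-Hölder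
functions bounded away from zero. -/
theorem coeff_holder_estimates
    (α : ℝ) (hα : α ∈ Set.Ioc (0:ℝ) 1)
    (m₁ m₂ M K K' : ℝ) (hm₁ : 0 < m₁) (hm₁₂ : m₁ ≤ m₂)
    (hM : 0 ≤ M) (hK : 0 ≤ K) (hK' : 0 ≤ K') :
    ∃ L : ℝ, ∀ ψ : E2 → ℝ, Differentiable ℝ ψ →
      (∀ u : E2, |ψ u| ≤ M) →
      (∀ u : E2, ‖fderiv ℝ ψ u‖ ≤ K) →
      (∀ u v : E2, ‖fderiv ℝ ψ u - fderiv ℝ ψ v‖ ≤ K' * ‖u - v‖) →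
      ∀ v' v'' : ℝ → E2,
        (∀ x ∈ Set.Icc (0:ℝ) 1, m₁ ≤ ‖v' x‖ ∧ ‖v' x‖ ≤ m₂) →
        (∀ x ∈ Set.Icc (0:ℝ) 1, m₁ ≤ ‖v'' x‖ ∧ ‖v'' x‖ ≤ m₂) →
        (∀ x ∈ Set.Icc (0:ℝ) 1, ∀ y ∈ Set.Icc (0:ℝ) 1,
           ‖v' x - v' y‖ ≤ m₂ * |x - y| ^ α) →
        (∀ x ∈ Set.Icc (0:ℝ) 1, ∀ y ∈ Set.Icc (0:ℝ) 1,
           ‖v'' x - v'' y‖ ≤ m₂ * |x - y| ^ α) →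
        supN (fun x => coeffA ψ (v' x) - coeffA ψ (v'' x))
            ≤ L * supNE (fun x => v' x - v'' x)
          ∧ hSemi α (fun x => coeffA ψ (v' x) - coeffA ψ (v'' x))
            ≤ L * (supNE (fun x => v' x - v'' x)
                + hSemiE α (fun x => v' x - v'' x)) :=
  coeff_holder_estimates_general α m₁ m₂ M K K' hm₁ hm₁₂ hM hK hK'
end
end

section
/- Let φ : ℝ² → [0,∞) be a norm and let X ∈ ℝ² with φ(X) = 1. Then there exist Y, Z ∈ ℝ² with Y ≠ Z, φ(Y) = φ(Z) = 1 and X + Y + Z = 0. -/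
noncomputable section
open Set

/-!
Normalising the Euclidean unit circle by `φ` maps it continuously onto the `φ`-unit circle, which
is therefore connected. Along it, `Y ↦ φ (X + Y)` runs from `φ (X - X) = 0` to `φ (X + X) = 2`,
so it takes the value `1` at some `Y`; then `Z = -(X + Y)` completes the triplet, and `Y ≠ Z`
because otherwise `X = -2 Y` would have `φ`-length `2`.
-/

namespace Seminorm

variable {E : Type*} [NormedAddCommGroup E] [NormedSpace ℝ E]

theorem continuous_of_finiteDimensional [FiniteDimensional ℝ E] (p : Seminorm ℝ E) :
    Continuous p :=
  continuousOn_univ.mp (p.convexOn.continuousOn isOpen_univ)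

theorem map_inv_smul_self (p : Seminorm ℝ E) {v : E} (hv : p v ≠ 0) : p ((p v)⁻¹ • v) = 1 := by
  rw [map_smul_eq_mul, norm_inv, Real.norm_of_nonneg (apply_nonneg p v), inv_mul_cancel₀ hv]

theorem isPreconnected_setOf_eq_one (p : Seminorm ℝ E) (hcont : Continuous p)
    (hp : ∀ x, p x = 0 → x = 0) (hE : 1 < Module.rank ℝ E) :
    IsPreconnected {x : E | p x = 1} := by
  have hsphere : ∀ v ∈ Metric.sphere (0 : E) 1, p v ≠ 0 := fun v hv h => by
    simp [hp v h] at hv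
  have himage : (fun v => (p v)⁻¹ • v) '' Metric.sphere 0 1 = {x : E | p x = 1} := by
    ext x
    constructor
    · rintro ⟨v, hv, rfl⟩
      exact p.map_inv_smul_self (hsphere v hv)
    · intro (hx : p x = 1)
      have hx0 : x ≠ 0 := by rintro rfl; simp at hx
      refine ⟨‖x‖⁻¹ • x, by simp [norm_smul, hx0], ?_⟩
      simp only [map_smul_eq_mul, hx, norm_inv, norm_norm, mul_one, inv_inv, smul_smul]
      rw [mul_inv_cancel₀ (norm_ne_zero_iff.mpr hx0), one_smul]
  rw [← himage]
  exact (isPreconnected_sphere hE 0 1).image _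
    ((hcont.continuousOn.inv₀ hsphere).smul continuousOn_id)

theorem exists_map_eq_one_map_add_eq_one (p : Seminorm ℝ E) (hcont : Continuous p)
    (hp : ∀ x, p x = 0 → x = 0) (hE : 1 < Module.rank ℝ E) {X : E} (hX : p X = 1) :
    ∃ Y, p Y = 1 ∧ p (X + Y) = 1 := by
  have hvalues : (1 : ℝ) ∈ Icc (p (X + -X)) (p (X + X)) := by
    rw [add_neg_cancel, map_zero, ← two_smul ℝ X, map_smul_eq_mul, hX]
    norm_num
  obtain ⟨Y, hY, hXY⟩ := (p.isPreconnected_setOf_eq_one hcont hp hE).intermediate_value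
    (by simpa using hX) hX (hcont.comp (continuous_const_add X)).continuousOn hvalues
  exact ⟨Y, hY, hXY⟩

end Seminorm

/-- Existence part of Lemma 4.11 of the paper (Lemma 2.16 of
Bellettini–Chambolle–Novaga): every unit vector of a norm on the plane can be
completed to an admissible triplet by two distinct unit vectors. -/
theorem admissible_triplet_exists
    (φ : E2 → ℝ)
    (hφ_triangle : ∀ x y : E2, φ (x + y) ≤ φ x + φ y)
    (hφ_hom : ∀ (c : ℝ) (x : E2), φ (c • x) = |c| * φ x)
    (hφ_pos : ∀ x : E2, φ x = 0 → x = 0)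
    (X : E2) (hX : φ X = 1) :
    ∃ Y Z : E2, Y ≠ Z ∧ φ Y = 1 ∧ φ Z = 1 ∧ X + Y + Z = 0 := by
  let p : Seminorm ℝ E2 := .of φ hφ_triangle fun c x => by rw [hφ_hom, Real.norm_eq_abs]
  have hrank : 1 < Module.rank ℝ E2 := by
    rw [← Module.finrank_eq_rank, finrank_euclideanSpace_fin]
    norm_num
  obtain ⟨Y, hY, hXY⟩ :=
    p.exists_map_eq_one_map_add_eq_one p.continuous_of_finiteDimensional hφ_pos hrank hX
  have hYZ : Y ≠ -(X + Y) := by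
    intro h
    have hX' : X = (-2 : ℝ) • Y := by linear_combination (norm := module) h
    have : p X = 2 := by rw [hX', map_smul_eq_mul, hY]; norm_num
    exact absurd (hX.symm.trans this) (by norm_num)
  exact ⟨Y, -(X + Y), hYZ, hY, (map_neg_eq_map p _).trans hXY, by abel⟩
end
end

section
/- Let φ : ℝ² → [0,∞) be a norm whose closed unit ball {v ∈ ℝ² : φ(v) ≤ 1} is a strictly convex set, and let X ∈ ℝ² with φ(X) = 1. Then the unordered pair {Y, Z} with φ(Y) = φ(Z) = 1 and X + Y + Z = 0 is unique: if (X, Y, Z) and (X, Y', Z') are both admissible triplets, then {Y, Z} = {Y', Z'}. -/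
noncomputable section
open Set

/-!
Completing `X` to an admissible triplet amounts to choosing `Y` with `Y` and `X + Y` on the unit
sphere of `φ`. Among three such points, order them by a linear form `f` with kernel `ℝ X` and let
`x₂` be the middle one. The point `p ∈ [x₁, x₃]` with `f p = f x₂` lies, together with `X + p`, in
the unit ball, and `p - x₂` is parallel to `X`. On the line `x₂ + ℝ X` strict convexity forces
`p = x₂`, since otherwise `x₂` or `x₂ + X` would lie strictly between two points of the ball.
Hence `x₂` is in the open segment `(x₁, x₃)`, i.e. in the interior of the ball, unless it is an
endpoint. So there are at most two choices of `Y`, and `Y` and `Z = -(X + Y)` are two distinct ones.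
-/

open Topology

theorem mem_segment_or_mem_segment_or_mem_segment (a b c : ℝ) :
    b ∈ segment ℝ a c ∨ a ∈ segment ℝ b c ∨ c ∈ segment ℝ a b := by
  simp only [segment_eq_uIcc, mem_uIcc]
  rcases le_total a b with hab | hab <;> rcases le_total b c with hbc | hbc <;>
    rcases le_total a c with hac | hac <;> simp [*]

theorem exists_ker_eq_span_singleton {K V : Type*} [Field K] [AddCommGroup V] [Module K V]
    (hV : Module.finrank K V = 2) {v : V} (hv : v ≠ 0) :
    ∃ f : V →ₗ[K] K, LinearMap.ker f = K ∙ v := by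
  have : FiniteDimensional K V := Module.finite_of_finrank_eq_succ hV
  obtain ⟨f, hf, hvf⟩ := (K ∙ v).exists_le_ker_of_lt_top
    (Submodule.lt_top_of_finrank_lt_finrank (by rw [finrank_span_singleton hv, hV]; norm_num))
  refine ⟨f, (Submodule.eq_of_le_of_finrank_eq hvf ?_).symm⟩
  have := Module.Dual.finrank_ker_add_one_of_ne_zero hf
  rw [finrank_span_singleton hv]
  omega

section UnitBall

variable {E : Type*} [AddCommGroup E] [Module ℝ E] [TopologicalSpace E] [ContinuousSMul ℝ E]
  {φ : E → ℝ}

theorem lt_one_of_mem_interior (hφ_hom : ∀ (c : ℝ) (x : E), φ (c • x) = |c| * φ x) {x : E}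
    (hx : x ∈ interior {v | φ v ≤ 1}) : φ x < 1 := by
  have hnhds : ∀ᶠ c : ℝ in 𝓝 1, c • x ∈ interior {v | φ v ≤ 1} :=
    (isOpen_interior.preimage (continuous_id.smul continuous_const)).mem_nhds (by simpa using hx)
  obtain ⟨c, hc, hcx⟩ := hnhds.exists_gt
  have hle : c * φ x ≤ 1 := by
    simpa [hφ_hom, abs_of_pos (one_pos.trans hc)] using interior_subset hcx
  by_contra! h
  nlinarith

theorem lt_one_of_mem_openSegment (hφ_hom : ∀ (c : ℝ) (x : E), φ (c • x) = |c| * φ x)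
    (hconv : StrictConvex ℝ {v | φ v ≤ 1}) {a b x : E} (ha : φ a ≤ 1) (hb : φ b ≤ 1)
    (hab : a ≠ b) (hx : x ∈ openSegment ℝ a b) : φ x < 1 :=
  lt_one_of_mem_interior hφ_hom (hconv.openSegment_subset ha hb hab hx)

theorem lt_one_of_mem_Ioo (hφ_hom : ∀ (c : ℝ) (x : E), φ (c • x) = |c| * φ x)
    (hconv : StrictConvex ℝ {v | φ v ≤ 1}) {x v : E} (hv : v ≠ 0) {s t u : ℝ}
    (hs : φ (x + s • v) ≤ 1) (hu : φ (x + u • v) ≤ 1) (ht : t ∈ Ioo s u) :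
    φ (x + t • v) < 1 := by
  let line : ℝ →ᵃ[ℝ] E := AffineMap.lineMap x (x + v)
  have hline (r : ℝ) : line r = x + r • v := by
    simp [line, AffineMap.lineMap_apply_module', add_comm]
  have hmem : line t ∈ openSegment ℝ (line s) (line u) := by
    rw [← image_openSegment, openSegment_eq_Ioo (ht.1.trans ht.2)]
    exact ⟨t, ht, rfl⟩
  rw [hline, hline, hline] at hmem
  refine lt_one_of_mem_openSegment hφ_hom hconv hs hu ?_ hmem
  simpa [smul_left_injective ℝ hv |>.eq_iff] using (ht.1.trans ht.2).ne

variable (φ) in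
/-- For even `φ`, `Y ∈ admissibleSet φ X` iff `(X, Y, -(X + Y))` is admissible. -/
def admissibleSet (X : E) : Set E := {Y | φ Y = 1 ∧ φ (X + Y) = 1}

theorem eq_of_sub_mem_span_singleton (hφ_hom : ∀ (c : ℝ) (x : E), φ (c • x) = |c| * φ x)
    (hconv : StrictConvex ℝ {v | φ v ≤ 1}) {X x y : E} (hX : X ≠ 0) (hx : x ∈ admissibleSet φ X)
    (hy : φ y ≤ 1) (hXy : φ (X + y) ≤ 1) (hxy : y - x ∈ ℝ ∙ X) : y = x := by
  obtain ⟨a, rfl⟩ : ∃ a : ℝ, y = x + a • X := by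
    obtain ⟨a, ha⟩ := Submodule.mem_span_singleton.mp hxy
    exact ⟨a, by rw [ha, add_sub_cancel]⟩
  rcases lt_trichotomy a 0 with ha | rfl | ha
  · have := lt_one_of_mem_Ioo hφ_hom hconv hX (t := 0) hy (u := 1)
      (by simpa [add_comm] using hx.2.le) ⟨ha, one_pos⟩
    simp only [zero_smul, add_zero] at this
    linarith [hx.1]
  · simp
  · have := lt_one_of_mem_Ioo hφ_hom hconv hX (s := 0) (t := 1) (u := 1 + a)
      (by simpa using hx.1.le) (by convert hXy using 2; module) ⟨one_pos, by linarith⟩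
    rw [one_smul, add_comm] at this
    linarith [hx.2]

theorem eq_or_eq_of_apply_mem_segment (hφ_hom : ∀ (c : ℝ) (x : E), φ (c • x) = |c| * φ x)
    (hconv : StrictConvex ℝ {v | φ v ≤ 1}) {X : E} (hX : X ≠ 0) {f : E →ₗ[ℝ] ℝ}
    (hf : LinearMap.ker f ≤ ℝ ∙ X) {x₁ x₂ x₃ : E} (h₁ : x₁ ∈ admissibleSet φ X)
    (h₂ : x₂ ∈ admissibleSet φ X) (h₃ : x₃ ∈ admissibleSet φ X)
    (h : f x₂ ∈ segment ℝ (f x₁) (f x₃)) : x₂ = x₁ ∨ x₂ = x₃ := by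
  rw [← LinearMap.coe_toAffineMap, ← image_segment] at h
  obtain ⟨p, hp, hfp⟩ := h
  have hp_ball : φ p ≤ 1 := hconv.convex.segment_subset h₁.1.le h₃.1.le hp
  have hXp_ball : φ (X + p) ≤ 1 :=
    (hconv.convex.translate_preimage_right X).segment_subset h₁.2.le h₃.2.le hp
  obtain rfl : p = x₂ := eq_of_sub_mem_span_singleton hφ_hom hconv hX h₂ hp_ball hXp_ball
    (hf (by simpa [sub_eq_zero] using hfp))
  by_contra! hne
  have h₁₃ : x₁ ≠ x₃ := by
    rintro rfl
    simp only [segment_same, mem_singleton_iff] at hp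
    exact hne.1 hp
  exact (lt_one_of_mem_openSegment hφ_hom hconv h₁.1.le h₃.1.le h₁₃
    (mem_openSegment_of_ne_left_right hne.1.symm hne.2.symm hp)).ne h₂.1

theorem eq_or_eq_or_eq_of_mem_admissibleSet (hE : Module.finrank ℝ E = 2)
    (hφ_hom : ∀ (c : ℝ) (x : E), φ (c • x) = |c| * φ x) (hconv : StrictConvex ℝ {v | φ v ≤ 1})
    {X : E} (hX : X ≠ 0) {x₁ x₂ x₃ : E} (h₁ : x₁ ∈ admissibleSet φ X)
    (h₂ : x₂ ∈ admissibleSet φ X) (h₃ : x₃ ∈ admissibleSet φ X) :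
    x₁ = x₂ ∨ x₂ = x₃ ∨ x₁ = x₃ := by
  obtain ⟨f, hf⟩ := exists_ker_eq_span_singleton hE hX
  rcases mem_segment_or_mem_segment_or_mem_segment (f x₁) (f x₂) (f x₃) with h | h | h
  · have := eq_or_eq_of_apply_mem_segment hφ_hom hconv hX hf.le h₁ h₂ h₃ h; tauto
  · have := eq_or_eq_of_apply_mem_segment hφ_hom hconv hX hf.le h₂ h₁ h₃ h; tauto
  · have := eq_or_eq_of_apply_mem_segment hφ_hom hconv hX hf.le h₁ h₃ h₂ h; tauto

end UnitBall

theorem admissible_triplet_unique_of_strictConvex_general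
    (φ : E2 → ℝ)
    (hφ_hom : ∀ (c : ℝ) (x : E2), φ (c • x) = |c| * φ x)
    (hconv : StrictConvex ℝ {v : E2 | φ v ≤ 1})
    (X : E2) (hX : φ X = 1) :
    ∀ Y Z Y' Z' : E2,
      φ Y = 1 → φ Z = 1 → X + Y + Z = 0 →
      φ Y' = 1 → φ Z' = 1 → X + Y' + Z' = 0 →
      (Y = Y' ∧ Z = Z') ∨ (Y = Z' ∧ Z = Y') := by
  intro Y Z Y' Z' hY hZ hXYZ hY' hZ' hXYZ'
  have hφ_neg (v : E2) : φ (-v) = φ v := by simpa using hφ_hom (-1) v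
  have hX0 : X ≠ 0 := by
    rintro rfl
    simpa [hX] using hφ_hom 0 0
  have hXY : X + Y = -Z := eq_neg_of_add_eq_zero_left hXYZ
  have hXZ : X + Z = -Y := eq_neg_of_add_eq_zero_left (by rwa [add_right_comm] at hXYZ)
  have hXY' : X + Y' = -Z' := eq_neg_of_add_eq_zero_left hXYZ'
  have hYZ : Y ≠ Z := by
    rintro rfl
    rw [show X = (-2 : ℝ) • Y by linear_combination (norm := module) hXY, hφ_hom, hY] at hX
    norm_num at hX
  rcases eq_or_eq_or_eq_of_mem_admissibleSet finrank_euclideanSpace_fin hφ_hom hconv hX0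
    (⟨hY, by rw [hXY, hφ_neg, hZ]⟩ : Y ∈ admissibleSet φ X) ⟨hZ, by rw [hXZ, hφ_neg, hY]⟩
    ⟨hY', by rw [hXY', hφ_neg, hZ']⟩ with h | h | h
  · exact absurd h hYZ
  · exact Or.inr ⟨neg_injective (by rw [← hXZ, h, hXY']), h⟩
  · exact Or.inl ⟨h, neg_injective (by rw [← hXY, h, hXY'])⟩

/-- Uniqueness part of Lemma 4.11 of the paper in the strictly convex case: for a norm
with strictly convex unit ball, the unordered pair completing a unit vector `X` to an
admissible triplet is unique. -/
theorem admissible_triplet_unique_of_strictConvex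
    (φ : E2 → ℝ)
    (hφ_triangle : ∀ x y : E2, φ (x + y) ≤ φ x + φ y)
    (hφ_hom : ∀ (c : ℝ) (x : E2), φ (c • x) = |c| * φ x)
    (hφ_pos : ∀ x : E2, φ x = 0 → x = 0)
    (hconv : StrictConvex ℝ {v : E2 | φ v ≤ 1})
    (X : E2) (hX : φ X = 1) :
    ∀ Y Z Y' Z' : E2,
      φ Y = 1 → φ Z = 1 → X + Y + Z = 0 →
      φ Y' = 1 → φ Z' = 1 → X + Y' + Z' = 0 →
      (Y = Y' ∧ Z = Z') ∨ (Y = Z' ∧ Z = Y') :=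
  admissible_triplet_unique_of_strictConvex_general φ hφ_hom hconv X hX
end
end

section
/- Let φ : ℝ² → [0,∞) be a norm and let X ∈ ℝ² with φ(X) = 1. Assume that every segment contained in the unit sphere of φ and parallel to X has Euclidean length at most |X|; precisely, assume that for all p ∈ ℝ² and t ∈ ℝ such that φ(p + s t X) = 1 for all s ∈ [0,1], one has |t| ≤ 1. Then the unordered pair {Y, Z} with φ(Y) = φ(Z) = 1 and X + Y + Z = 0 is unique: if (X, Y, Z) and (X, Y', Z') are both admissible triplets, then {Y, Z} = {Y', Z'}. -/
/-!
With `Z = -(X + Y)`, the triplet `(X, Y, Z)` is admissible exactly when `Y` and `Y + X` both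
lie on the unit sphere, i.e. `[Y, Y + X]` is a chord of the sphere parallel to `X`; `[Z, Z + X]`
is then the opposite chord. In the plane, `X` and `Y` form a basis, so up to exchanging the two
chords and the two triplets, a second chord `[A, A + X]` has `A = l • B + r • X` with `B` a chord
of the first triplet and `0 ≤ l ≤ 1`. The convex combinations `l • B - (1 - l) • X` and
`l • (B + X) + (1 - l) • X` lie in the unit ball on the line `A + ℝ X`, at distance
`(2 - l)` times `X` apart. The smallest segment containing them and the chord lies in the ball
and meets the sphere at an interior point, so by convexity it lies in the sphere, and the
hypothesis bounds its length by `|X|`. This forces `l = 1` and `A = B`.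
-/

noncomputable section
open Set

open Module

theorem ConvexOn.eq_on_Icc_of_interior_max {f : ℝ → ℝ} {m M z c : ℝ}
    (hf : ConvexOn ℝ (Icc m M) f) (hm : f m ≤ c) (hM : f M ≤ c) (hz : z ∈ Ioo m M)
    (hfz : f z = c) : ∀ s ∈ Icc m M, f s = c := by
  intro s hs
  have hmM : m ≤ M := hs.1.trans hs.2
  refine le_antisymm ?_ ?_
  · rw [← segment_eq_Icc hmM] at hs
    exact (hf.le_on_segment (left_mem_Icc.2 hmM) (right_mem_Icc.2 hmM) hs).trans (max_le hm hM)
  · rcases le_or_gt s z with hsz | hzs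
    · exact hfz ▸ hf.le_left_of_right_le'' hs (right_mem_Icc.2 hmM) hsz hz.2 (hfz ▸ hM)
    · exact hfz ▸ hf.le_right_of_left_le'' (left_mem_Icc.2 hmM) hs hz.1 hzs.le (hfz ▸ hm)

section Seminorm

variable {E : Type*} [AddCommGroup E] [Module ℝ E] (p : Seminorm ℝ E)

theorem Seminorm.convexOn_line (a X : E) : ConvexOn ℝ univ fun t : ℝ => p (a + t • X) :=
  (p.convexOn.translate_right a).comp_linearMap (LinearMap.toSpanSingleton ℝ E X)

theorem Seminorm.smul_add_smul_le_one {x y : E} {a b : ℝ} (hx : p x ≤ 1) (hy : p y ≤ 1)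
    (ha : 0 ≤ a) (hb : 0 ≤ b) (hab : a + b = 1) : p (a • x + b • y) ≤ 1 := by
  simpa using p.convex_closedBall 0 1 (by simpa using hx) (by simpa using hy) ha hb hab

def ShortFacets (X : E) : Prop :=
  ∀ (q : E) (t : ℝ), (∀ s ∈ Icc (0 : ℝ) 1, p (q + (s * t) • X) = 1) → |t| ≤ 1

def IsSphereChord (X Y : E) : Prop := p Y = 1 ∧ p (Y + X) = 1

variable {p} {X : E}

theorem IsSphereChord.neg_add {Y : E} (hY : IsSphereChord p X Y) :
    IsSphereChord p X (-(X + Y)) := by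
  refine ⟨?_, ?_⟩
  · rw [map_neg_eq_map, add_comm]; exact hY.2
  · rw [neg_add_rev, neg_add_cancel_right, map_neg_eq_map]; exact hY.1

theorem ShortFacets.sub_le_one_of_mem_Ioo (h : ShortFacets p X) {a : E} {m M z : ℝ}
    (hm : p (a + m • X) ≤ 1) (hM : p (a + M • X) ≤ 1) (hz : z ∈ Ioo m M)
    (hpz : p (a + z • X) = 1) : M - m ≤ 1 := by
  have hsphere := ((p.convexOn_line a X).subset (subset_univ _)
    (convex_Icc m M)).eq_on_Icc_of_interior_max hm hM hz hpz
  have hmM : m ≤ M := hz.1.le.trans hz.2.le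
  have := h (a + m • X) (M - m) fun s hs => by
    rw [add_assoc, ← add_smul]
    exact hsphere _ ⟨by nlinarith [hs.1], by nlinarith [hs.2]⟩
  exact (le_abs_self _).trans this

theorem ShortFacets.sub_le_one (h : ShortFacets p X) {A : E} (hA : IsSphereChord p X A)
    {m M : ℝ} (hm : p (A + m • X) ≤ 1) (hM : p (A + M • X) ≤ 1) :
    max M 1 - min m 0 ≤ 1 := by
  have hm' : p (A + min m 0 • X) ≤ 1 := by
    rcases min_choice m 0 with h0 | h0 <;> rw [h0]
    exacts [hm, by simpa using hA.1.le]
  have hM' : p (A + max M 1 • X) ≤ 1 := by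
    rcases max_choice M 1 with h1 | h1 <;> rw [h1]
    exacts [hM, by simpa using hA.2.le]
  by_contra! hlong
  rcases (min_le_right m 0).eq_or_lt with h0 | h0
  · exact hlong.not_ge <| h.sub_le_one_of_mem_Ioo hm' hM' (z := 1)
      ⟨by linarith, by linarith⟩ (by simpa using hA.2)
  · exact hlong.not_ge <| h.sub_le_one_of_mem_Ioo hm' hM' (z := 0)
      ⟨h0, by linarith [le_max_right M 1]⟩ (by simpa using hA.1)

theorem ShortFacets.eq_one_and_eq_zero_of_eq_smul_add (h : ShortFacets p X) (hX : p X = 1)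
    {A B : E} (hA : IsSphereChord p X A) (hB : IsSphereChord p X B) {l r : ℝ} (hl0 : 0 ≤ l)
    (hl1 : l ≤ 1) (hAB : A = l • B + r • X) : l = 1 ∧ r = 0 := by
  have hleft : p (A + (l - 1 - r) • X) ≤ 1 := by
    have : A + (l - 1 - r) • X = l • B + (1 - l) • (-X) := by rw [hAB]; module
    rw [this]
    exact p.smul_add_smul_le_one hB.1.le (by rw [map_neg_eq_map, hX]) hl0 (by linarith) (by ring)
  have hright : p (A + (1 - r) • X) ≤ 1 := by
    have : A + (1 - r) • X = l • (B + X) + (1 - l) • X := by rw [hAB]; module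
    rw [this]
    exact p.smul_add_smul_le_one hB.2.le hX.le hl0 (by linarith) (by ring)
  have := h.sub_le_one hA hleft hright
  constructor <;> linarith [le_max_left (1 - r) 1, le_max_right (1 - r) 1,
    min_le_left (l - 1 - r) 0, min_le_right (l - 1 - r) 0]

theorem ShortFacets.eq_or_eq_neg_add_of_eq_smul_add (h : ShortFacets p X) (hX : p X = 1)
    {A B : E} (hA : IsSphereChord p X A) (hB : IsSphereChord p X B) {l r : ℝ} (hl : |l| ≤ 1)
    (hAB : A = l • B + r • X) : A = B ∨ A = -(X + B) := by
  obtain ⟨hl_lo, hl_hi⟩ := abs_le.1 hl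
  rcases le_or_gt 0 l with hl0 | hl0
  · obtain ⟨rfl, rfl⟩ := h.eq_one_and_eq_zero_of_eq_smul_add hX hA hB hl0 hl_hi hAB
    left; simpa using hAB
  · have hAB' : A = (-l) • -(X + B) + (r - l) • X := by rw [hAB]; module
    obtain ⟨hl1, hr⟩ := h.eq_one_and_eq_zero_of_eq_smul_add hX hA hB.neg_add (by linarith)
      (by linarith) hAB'
    right; rw [hAB', hl1, hr]; module

theorem IsSphereChord.linearIndependent (hX : p X = 1) {Y : E} (hY : IsSphereChord p X Y) :
    LinearIndependent ℝ ![X, Y] := by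
  have hX0 : X ≠ 0 := by rintro rfl; simp at hX
  refine (LinearIndependent.pair_iff' hX0).2 fun c hc => ?_
  obtain ⟨h1, h2⟩ := hY
  rw [← hc, show c • X + X = (c + 1) • X by module] at h2
  rw [← hc] at h1
  simp only [map_smul_eq_mul, hX, mul_one, Real.norm_eq_abs] at h1 h2
  rcases abs_eq zero_le_one |>.1 h1 with rfl | rfl <;> norm_num at h2

theorem ShortFacets.eq_or_eq_neg_add (hE : finrank ℝ E = 2) (h : ShortFacets p X)
    (hX : p X = 1) {Y Y' : E} (hY : IsSphereChord p X Y) (hY' : IsSphereChord p X Y') :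
    Y' = Y ∨ Y' = -(X + Y) := by
  have hspan : Submodule.span ℝ {X, Y} = ⊤ := by
    rw [← Matrix.range_cons_cons_empty X Y ![]]
    exact (hY.linearIndependent hX).span_eq_top_of_card_eq_finrank (by simp [hE])
  obtain ⟨β, α, hαβ⟩ := Submodule.mem_span_pair.1 (hspan ▸ Submodule.mem_top (x := Y'))
  rcases le_or_gt |α| 1 with hα | hα
  · exact h.eq_or_eq_neg_add_of_eq_smul_add hX hY' hY hα (by rw [← hαβ, add_comm])
  · have hα0 : α ≠ 0 := by rintro rfl; norm_num at hα
    have hYY' : Y = α⁻¹ • Y' + (-(α⁻¹ * β)) • X := by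
      rw [← hαβ, smul_add, smul_smul, smul_smul, inv_mul_cancel₀ hα0]; module
    rcases h.eq_or_eq_neg_add_of_eq_smul_add hX hY hY'
      (by rw [abs_inv]; exact inv_le_one_of_one_le₀ hα.le) hYY' with rfl | rfl
    · exact .inl rfl
    · right; abel

end Seminorm

theorem admissible_triplet_unique_of_short_facets_general
    (φ : E2 → ℝ)
    (hφ_triangle : ∀ x y : E2, φ (x + y) ≤ φ x + φ y)
    (hφ_hom : ∀ (c : ℝ) (x : E2), φ (c • x) = |c| * φ x)
    (X : E2) (hX : φ X = 1)
    (hshort : ∀ (p : E2) (t : ℝ),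
      (∀ s ∈ Set.Icc (0:ℝ) 1, φ (p + (s * t) • X) = 1) → |t| ≤ 1) :
    ∀ Y Z Y' Z' : E2,
      φ Y = 1 → φ Z = 1 → X + Y + Z = 0 →
      φ Y' = 1 → φ Z' = 1 → X + Y' + Z' = 0 →
      (Y = Y' ∧ Z = Z') ∨ (Y = Z' ∧ Z = Y') := by
  intro Y Z Y' Z' hY hZ hXYZ hY' hZ' hXYZ'
  let p : Seminorm ℝ E2 := Seminorm.of φ hφ_triangle hφ_hom
  have chord {W : E2} (hW : φ W = 1) (hW' : φ (-(X + W)) = 1) : IsSphereChord p X W :=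
    ⟨hW, by rwa [add_comm, ← map_neg_eq_map]⟩
  obtain rfl := eq_neg_of_add_eq_zero_right hXYZ
  obtain rfl := eq_neg_of_add_eq_zero_right hXYZ'
  rcases ShortFacets.eq_or_eq_neg_add finrank_euclideanSpace_fin (p := p) hshort hX (chord hY hZ)
    (chord hY' hZ') with rfl | rfl
  · exact .inl ⟨rfl, rfl⟩
  · exact .inr ⟨by abel, rfl⟩

/-- General uniqueness statement of Lemma 4.11 of the paper: if no segment of the unit
sphere of the norm `φ` parallel to `X` is (Euclidean-)longer than `X`, then the
unordered pair completing `X` to an admissible triplet is unique. -/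
theorem admissible_triplet_unique_of_short_facets
    (φ : E2 → ℝ)
    (hφ_triangle : ∀ x y : E2, φ (x + y) ≤ φ x + φ y)
    (hφ_hom : ∀ (c : ℝ) (x : E2), φ (c • x) = |c| * φ x)
    (hφ_pos : ∀ x : E2, φ x = 0 → x = 0)
    (X : E2) (hX : φ X = 1)
    (hshort : ∀ (p : E2) (t : ℝ),
      (∀ s ∈ Set.Icc (0:ℝ) 1, φ (p + (s * t) • X) = 1) → |t| ≤ 1) :
    ∀ Y Z Y' Z' : E2,
      φ Y = 1 → φ Z = 1 → X + Y + Z = 0 →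
      φ Y' = 1 → φ Z' = 1 → X + Y' + Z' = 0 →
      (Y = Y' ∧ Z = Z') ∨ (Y = Z' ∧ Z = Y') :=
  admissible_triplet_unique_of_short_facets_general φ hφ_triangle hφ_hom X hX hshort
end
end

section
/- Let φ : ℝ² → [0,∞) be a norm and let X ∈ ℝ² with φ(X) = 1. Assume the unit sphere of φ contains a segment parallel to X of Euclidean length strictly greater than |X|; precisely, assume there exist p ∈ ℝ² and t > 1 such that φ(p + s t X) = 1 for all s ∈ [0,1]. Then the set of unordered pairs {Y, Z} with Y ≠ Z, φ(Y) = φ(Z) = 1 and X + Y + Z = 0 is infinite. -/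
noncomputable section
open Set

/-- Non-uniqueness statement of Lemma 4.11 of the paper: if the unit sphere of the norm
`φ` contains a segment parallel to `X` of Euclidean length strictly greater than `|X|`,
then there are infinitely many unordered pairs `{Y, Z}` completing `X` to an admissible
triplet. -/
theorem admissible_triplet_infinite_of_long_facet
    (φ : E2 → ℝ)
    (hφ_triangle : ∀ x y : E2, φ (x + y) ≤ φ x + φ y)
    (hφ_hom : ∀ (c : ℝ) (x : E2), φ (c • x) = |c| * φ x)
    (hφ_pos : ∀ x : E2, φ x = 0 → x = 0)
    (X : E2) (hX : φ X = 1)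
    (hlong : ∃ (p : E2) (t : ℝ), 1 < t ∧ ∀ s ∈ Set.Icc (0:ℝ) 1, φ (p + (s * t) • X) = 1) :
    {S : Set E2 | ∃ Y Z : E2, Y ≠ Z ∧ S = {Y, Z} ∧ φ Y = 1 ∧ φ Z = 1 ∧
      X + Y + Z = 0}.Infinite := by
  obtain ⟨p, t, ht, hseg⟩ := hlong
  have ht0 : (0:ℝ) < t := lt_trans one_pos ht
  have hφ0 : φ 0 = 0 := by simpa using hφ_hom 0 0
  have hXne : X ≠ 0 := by
    intro h; rw [h, hφ0] at hX; norm_num at hX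
  have hneg : ∀ v : E2, φ (-v) = φ v := by
    intro v; simpa using hφ_hom (-1) v
  -- p is not a scalar multiple of X
  have hp : ∀ r : ℝ, p ≠ r • X := by
    intro r hr
    have h0 : φ p = 1 := by simpa using hseg 0 ⟨le_refl _, zero_le_one⟩
    have hr1 : |r| = 1 := by rw [hr, hφ_hom, hX, mul_one] at h0; exact h0
    have h1 : |r + t| = 1 := by
      have h := hseg 1 ⟨zero_le_one, le_refl _⟩
      rw [hr, one_mul, ← add_smul, hφ_hom, hX, mul_one] at h
      exact h
    rcases (abs_eq (by norm_num : (0:ℝ) ≤ 1)).mp hr1 with h | h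
    · rw [h, abs_of_pos (by linarith)] at h1; linarith
    · have ht2 : t = 2 := by
        rcases (abs_eq (by norm_num : (0:ℝ) ≤ 1)).mp h1 with h' | h' <;> linarith
      have hhalf := hseg (1/2) ⟨by norm_num, by norm_num⟩
      rw [hr, h, ht2] at hhalf
      have hz : (-1:ℝ) • X + ((1:ℝ)/2 * 2) • X = 0 := by module
      rw [hz, hφ0] at hhalf
      norm_num at hhalf
  -- the two elements of any candidate pair are never equal across parameters
  have hkey : ∀ s s' : ℝ, p + (s * t) • X ≠ -X - p - (s' * t) • X := by
    intro s s' hEq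
    apply hp (-(1 + (s + s') * t) / 2)
    have h2 : (2:ℝ) • p = (-(1 + (s + s') * t)) • X := by
      have h3 : (p + (s * t) • X) + (p + (s' * t) • X) + X = 0 := by
        rw [hEq]; module
      have h4 := h3
      -- rearrange
      have : (2:ℝ) • p + (1 + (s + s') * t) • X = 0 := by
        linear_combination (norm := module) h3
      linear_combination (norm := module) this
    calc p = (2:ℝ)⁻¹ • ((2:ℝ) • p) := by module
    _ = (-(1 + (s + s') * t) / 2) • X := by rw [h2]; module
  set u : ℝ := 1 - 1/t with hu
  have hu0 : 0 < u := by
    have : 1/t < 1 := by rw [div_lt_one ht0]; exact ht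
    rw [hu]; have h1t : 0 < 1/t := by positivity
    linarith
  apply Set.infinite_of_injOn_mapsTo
    (f := fun s : ℝ => ({p + (s * t) • X, -X - p - (s * t) • X} : Set E2))
    (s := Set.Ioo 0 u)
  · -- InjOn
    intro s1 hs1 s2 hs2 hEq
    rcases Set.pair_eq_pair_iff.mp hEq with ⟨h, -⟩ | ⟨h, -⟩
    · have : (s1 * t) • X = (s2 * t) • X := by
        have := h; exact add_left_cancel this
      have := smul_left_injective ℝ hXne this
      exact mul_right_cancel₀ (ne_of_gt ht0) this
    · exact absurd h (hkey s1 s2)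
  · -- MapsTo
    intro s hs
    have hs01 : s ∈ Set.Icc (0:ℝ) 1 := by
      constructor
      · exact le_of_lt hs.1
      · have h2 := hs.2; rw [hu] at h2; have h1t : 0 < 1/t := by positivity
        linarith
    refine ⟨p + (s * t) • X, -X - p - (s * t) • X, hkey s s, rfl, hseg s hs01, ?_, by module⟩
    have hmem : s + 1/t ∈ Set.Icc (0:ℝ) 1 := by
      constructor
      · have h1t : 0 < 1/t := by positivity
        linarith [hs.1]
      · have h2 := hs.2; rw [hu] at h2; linarith
    have := hseg (s + 1/t) hmem
    have heq : p + ((s + 1/t) * t) • X = -(- X - p - (s * t) • X) := by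
      have htne : t ≠ 0 := ne_of_gt ht0
      field_simp
      module
    rw [heq, hneg] at this
    exact this
  · exact Set.Ioo_infinite hu0
end
end
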